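/- arXiv:2004.06873 — 9 statements merged into one kernel-verified Lean document; each statement's English description precedes it below -/
import Mathlib

section
/- Let P₁ and P₂ be orthogonal projectors on a finite-dimensional complex Hilbert space, each fixing a unit vector |Ψ⟩ (P₁|Ψ⟩ = |Ψ⟩ = P₂|Ψ⟩), with ranks rank(P₁) ≥ 2 and rank(P₂) ≥ 2. Define P̄ᵢ = Pᵢ − |Ψ⟩⟨Ψ| and q = ‖P̄₁P̄₂P̄₁‖ (operator norm). Then for every p ∈ [0,1], the second largest eigenvalue of Ω = pP₁ + (1−p)P₂ satisfies λ₂(Ω) ≥ (1+√q)/2. -/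
/-!
Put Qᵢ = Pᵢ - |Ψ⟩⟨Ψ|. These are nonzero orthogonal projections, Ω - |Ψ⟩⟨Ψ| = p Q₁ + (1 - p) Q₂,
and √‖Q₁Q₂Q₁‖ = ‖Q₂Q₁‖ by the C*-identity. For unit vectors u ∈ ran Q₁ and v ∈ ran Q₂ the test
vector z = u + v has ‖z‖² = 2 (1 + Re⟨u, v⟩) while ‖Qᵢ z‖ ≥ 1 + Re⟨u, v⟩, so the Rayleigh quotient
of p Q₁ + (1 - p) Q₂ at z is at least (1 + Re⟨u, v⟩) / 2. Normalising Q₁x and Q₂Q₁x for x almost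
attaining ‖Q₂Q₁‖ makes Re⟨u, v⟩ as close to ‖Q₂Q₁‖ as we like; the Rayleigh quotients at unit
vectors of ran Q₁ and ran Q₂ give the bound ‖p Q₁ + (1 - p) Q₂‖ ≥ max(p, 1 - p) ≥ 1/2, which
settles the case ‖Q₂Q₁‖ = 0.
-/

open scoped Matrix.Norms.L2Operator
open Matrix

/-- The rank-one projector `|Ψ⟩⟨Ψ|`. -/
def projVec {d : ℕ} (Ψ : Fin d → ℂ) : Matrix (Fin d) (Fin d) ℂ :=
  fun i j => Ψ i * star (Ψ j)

open scoped InnerProductSpace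
open RCLike

theorem IsStarProjection.sqrt_norm_mul_mul_eq {A : Type*} [NonUnitalNormedRing A] [StarRing A]
    [CStarRing A] {e f : A} (he : IsStarProjection e) (hf : IsStarProjection f) :
    √‖e * f * e‖ = ‖f * e‖ := by
  have h : e * f * e = star (f * e) * (f * e) := by
    calc e * f * e = e * (f * f) * e := by rw [hf.isIdempotentElem.eq]
      _ = star (f * e) * (f * e) := by
        rw [star_mul, he.isSelfAdjoint.star_eq, hf.isSelfAdjoint.star_eq]; simp only [mul_assoc]
  rw [h, CStarRing.norm_star_mul_self, Real.sqrt_mul_self (norm_nonneg _)]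

namespace IsStarProjection

variable {𝕜 E : Type*} [RCLike 𝕜] [NormedAddCommGroup E] [InnerProductSpace 𝕜 E] [CompleteSpace E]
  {T T₁ T₂ : E →L[𝕜] E}

theorem apply_apply (hT : IsStarProjection T) (x : E) : T (T x) = T x :=
  congr($(hT.isIdempotentElem.eq) x)

theorem inner_apply_comm (hT : IsStarProjection T) (x y : E) : ⟪T x, y⟫_𝕜 = ⟪x, T y⟫_𝕜 :=
  hT.isSelfAdjoint.isSymmetric x y

theorem inner_apply_self (hT : IsStarProjection T) (x : E) : ⟪x, T x⟫_𝕜 = (‖T x‖ : 𝕜) ^ 2 := by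
  rw [← inner_self_eq_norm_sq_to_K, hT.inner_apply_comm, hT.apply_apply]

theorem norm_inner_le (hT : IsStarProjection T) {u : E} (hu : T u = u) (z : E) :
    ‖⟪u, z⟫_𝕜‖ ≤ ‖u‖ * ‖T z‖ := by
  rw [← hu, hT.inner_apply_comm, hu]
  exact norm_inner_le_norm _ _

theorem exists_norm_eq_one_apply_eq (hT : IsStarProjection T) (h : T ≠ 0) :
    ∃ u, ‖u‖ = 1 ∧ T u = u := by
  obtain ⟨x, hx⟩ : ∃ x, T x ≠ 0 := by simpa [ContinuousLinearMap.ext_iff] using h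
  exact ⟨(‖T x‖⁻¹ : 𝕜) • T x, norm_smul_inv_norm hx, by rw [map_smul, hT.apply_apply]⟩

theorem mul_norm_sq_add_mul_norm_sq_le (hT₁ : IsStarProjection T₁) (hT₂ : IsStarProjection T₂) (p : ℝ)
    (z : E) :
    p * ‖T₁ z‖ ^ 2 + (1 - p) * ‖T₂ z‖ ^ 2 ≤ ‖(p : 𝕜) • T₁ + (1 - p : 𝕜) • T₂‖ * ‖z‖ ^ 2 := by
  set Ω := (p : 𝕜) • T₁ + (1 - p : 𝕜) • T₂
  have h : ⟪z, Ω z⟫_𝕜 = ((p * ‖T₁ z‖ ^ 2 + (1 - p) * ‖T₂ z‖ ^ 2 : ℝ) : 𝕜) := by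
    simp only [Ω, _root_.add_apply, _root_.smul_apply, inner_add_right,
      inner_smul_right, hT₁.inner_apply_self, hT₂.inner_apply_self]
    push_cast
    ring
  calc p * ‖T₁ z‖ ^ 2 + (1 - p) * ‖T₂ z‖ ^ 2 = re ⟪z, Ω z⟫_𝕜 := by rw [h, ofReal_re]
    _ ≤ ‖z‖ * ‖Ω z‖ := re_inner_le_norm _ _
    _ ≤ ‖z‖ * (‖Ω‖ * ‖z‖) := by gcongr; exact Ω.le_opNorm z
    _ = ‖Ω‖ * ‖z‖ ^ 2 := by ring

theorem le_norm_smul_add_smul (hT₁ : IsStarProjection T₁) (hT₂ : IsStarProjection T₂)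
    (h₁ : T₁ ≠ 0) {p : ℝ} (hp : p ≤ 1) : p ≤ ‖(p : 𝕜) • T₁ + (1 - p : 𝕜) • T₂‖ := by
  obtain ⟨u, hu1, hu⟩ := hT₁.exists_norm_eq_one_apply_eq h₁
  have := hT₁.mul_norm_sq_add_mul_norm_sq_le hT₂ p u
  rw [hu, hu1] at this
  nlinarith [sq_nonneg ‖T₂ u‖]

theorem one_add_re_inner_div_two_le_norm (hT₁ : IsStarProjection T₁) (hT₂ : IsStarProjection T₂)
    {u v : E} (hu : T₁ u = u) (hv : T₂ v = v) (hu1 : ‖u‖ = 1) (hv1 : ‖v‖ = 1) {p : ℝ}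
    (hp0 : 0 ≤ p) (hp1 : p ≤ 1) :
    (1 + re ⟪u, v⟫_𝕜) / 2 ≤ ‖(p : 𝕜) • T₁ + (1 - p : 𝕜) • T₂‖ := by
  set t := re ⟪u, v⟫_𝕜
  have hz : ‖u + v‖ ^ 2 = 2 * (1 + t) := by rw [norm_add_sq (𝕜 := 𝕜), hu1, hv1]; ring
  have h₁ : 1 + t ≤ ‖T₁ (u + v)‖ := by
    calc 1 + t = re ⟪u, u + v⟫_𝕜 := by
          rw [inner_add_right, map_add, inner_self_eq_norm_sq (𝕜 := 𝕜), hu1]; ring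
      _ ≤ ‖u‖ * ‖T₁ (u + v)‖ := (re_le_norm _).trans (hT₁.norm_inner_le hu _)
      _ = ‖T₁ (u + v)‖ := by rw [hu1, one_mul]
  have h₂ : 1 + t ≤ ‖T₂ (u + v)‖ := by
    calc 1 + t = re ⟪v, u + v⟫_𝕜 := by
          rw [inner_add_right, map_add, inner_self_eq_norm_sq (𝕜 := 𝕜), hv1, inner_re_symm]; ring
      _ ≤ ‖v‖ * ‖T₂ (u + v)‖ := (re_le_norm _).trans (hT₂.norm_inner_le hv _)
      _ = ‖T₂ (u + v)‖ := by rw [hv1, one_mul]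
  have hR := hT₁.mul_norm_sq_add_mul_norm_sq_le hT₂ p (u + v)
  rw [hz] at hR
  rcases le_or_gt (1 + t) 0 with ht | ht
  · linarith [norm_nonneg ((p : 𝕜) • T₁ + (1 - p : 𝕜) • T₂)]
  · have : (1 + t) ^ 2 ≤ p * ‖T₁ (u + v)‖ ^ 2 + (1 - p) * ‖T₂ (u + v)‖ ^ 2 := by
      nlinarith [pow_le_pow_left₀ ht.le h₁ 2, pow_le_pow_left₀ ht.le h₂ 2]
    nlinarith

theorem exists_lt_re_inner (hT₁ : IsStarProjection T₁) (hT₂ : IsStarProjection T₂) {c : ℝ}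
    (hc : 0 ≤ c) (h : c < ‖T₂ * T₁‖) :
    ∃ u v : E, T₁ u = u ∧ T₂ v = v ∧ ‖u‖ = 1 ∧ ‖v‖ = 1 ∧ c < re ⟪u, v⟫_𝕜 := by
  obtain ⟨x, hx1, hx⟩ := (T₂ * T₁).exists_lt_apply_of_lt_opNorm h
  set w := T₁ x
  set y := T₂ w
  have hy : c < ‖y‖ := hx
  have hw1 : ‖w‖ < 1 := ((T₁.le_opNorm x).trans
    (mul_le_of_le_one_left (norm_nonneg x) (hT₁.norm_le T₁))).trans_lt hx1
  have hy0 : y ≠ 0 := norm_pos_iff.mp (hc.trans_lt hy)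
  have hw0 : w ≠ 0 := fun h0 => hy0 (by simp [y, h0])
  refine ⟨(‖w‖⁻¹ : 𝕜) • w, (‖y‖⁻¹ : 𝕜) • y, by rw [map_smul, hT₁.apply_apply],
    by rw [map_smul, hT₂.apply_apply], norm_smul_inv_norm hw0, norm_smul_inv_norm hy0, ?_⟩
  have hwy : ⟪w, y⟫_𝕜 = (‖y‖ : 𝕜) ^ 2 := hT₂.inner_apply_self w
  simp only [inner_smul_left, inner_smul_right, hwy, ← ofReal_inv, conj_ofReal, ← ofReal_pow,
    ← ofReal_mul, ofReal_re]
  have hwpos : 0 < ‖w‖ := norm_pos_iff.mpr hw0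
  calc c < ‖y‖ := hy
    _ ≤ ‖y‖ / ‖w‖ := le_div_self (norm_nonneg y) hwpos hw1.le
    _ = ‖y‖⁻¹ * (‖w‖⁻¹ * ‖y‖ ^ 2) := by field_simp

theorem one_add_sqrt_norm_div_two_le_norm (hT₁ : IsStarProjection T₁) (hT₂ : IsStarProjection T₂)
    (h₁ : T₁ ≠ 0) (h₂ : T₂ ≠ 0) {p : ℝ} (hp0 : 0 ≤ p) (hp1 : p ≤ 1) :
    (1 + √‖T₁ * T₂ * T₁‖) / 2 ≤ ‖(p : 𝕜) • T₁ + (1 - p : 𝕜) • T₂‖ := by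
  set R := ‖(p : 𝕜) • T₁ + (1 - p : 𝕜) • T₂‖
  have hp_le : p ≤ R := hT₁.le_norm_smul_add_smul hT₂ h₁ hp1
  have hq_le : 1 - p ≤ R := by
    have := hT₂.le_norm_smul_add_smul hT₁ h₂ (p := 1 - p) (by linarith)
    rwa [add_comm, ofReal_sub, ofReal_one, sub_sub_cancel] at this
  rw [hT₁.sqrt_norm_mul_mul_eq hT₂]
  by_contra! h
  obtain ⟨u, v, hu, hv, hu1, hv1, huv⟩ :=
    hT₁.exists_lt_re_inner hT₂ (c := 2 * R - 1) (by linarith) (by linarith)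
  linarith [hT₁.one_add_re_inner_div_two_le_norm hT₂ hu hv hu1 hv1 hp0 hp1]

end IsStarProjection

section
variable {d : ℕ} {Ψ : Fin d → ℂ}

theorem projVec_eq_vecMulVec : projVec Ψ = vecMulVec Ψ (star Ψ) := rfl

theorem isStarProjection_projVec (hΨ : star Ψ ⬝ᵥ Ψ = 1) : IsStarProjection (projVec Ψ) where
  isIdempotentElem := by
    rw [IsIdempotentElem, projVec_eq_vecMulVec, vecMulVec_mul_vecMulVec, hΨ, one_smul]
  isSelfAdjoint := by
    rw [IsSelfAdjoint, projVec_eq_vecMulVec, star_eq_conjTranspose, conjTranspose_vecMulVec,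
      star_star]

theorem mul_projVec_of_mulVec_eq {P : Matrix (Fin d) (Fin d) ℂ} (h : P *ᵥ Ψ = Ψ) :
    P * projVec Ψ = projVec Ψ := by
  rw [projVec_eq_vecMulVec, mul_vecMulVec, h]

theorem isStarProjection_sub_projVec (hΨ : star Ψ ⬝ᵥ Ψ = 1) {P : Matrix (Fin d) (Fin d) ℂ}
    (hP : IsStarProjection P) (h : P *ᵥ Ψ = Ψ) : IsStarProjection (P - projVec Ψ) :=
  (isStarProjection_projVec hΨ).sub_of_mul_eq_right hP (mul_projVec_of_mulVec_eq h)

theorem sub_projVec_ne_zero {P : Matrix (Fin d) (Fin d) ℂ} (h : 2 ≤ P.rank) :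
    P - projVec Ψ ≠ 0 := by
  rw [sub_ne_zero]
  rintro rfl
  have := rank_vecMulVec_le Ψ (star Ψ)
  rw [← projVec_eq_vecMulVec] at this
  omega

end

theorem stmt_0 {d : ℕ} (P₁ P₂ : Matrix (Fin d) (Fin d) ℂ) (Ψ : Fin d → ℂ)
    (hΨ : star Ψ ⬝ᵥ Ψ = 1)
    (h₁herm : P₁.IsHermitian) (h₁proj : P₁ * P₁ = P₁)
    (h₂herm : P₂.IsHermitian) (h₂proj : P₂ * P₂ = P₂)
    (h₁fix : P₁.mulVec Ψ = Ψ) (h₂fix : P₂.mulVec Ψ = Ψ)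
    (h₁rank : 2 ≤ P₁.rank) (h₂rank : 2 ≤ P₂.rank)
    (p : ℝ) (hp : p ∈ Set.Icc (0 : ℝ) 1) :
    (1 + Real.sqrt ‖(P₁ - projVec Ψ) * (P₂ - projVec Ψ) * (P₁ - projVec Ψ)‖) / 2 ≤
      ‖(p : ℂ) • P₁ + ((1 : ℂ) - p) • P₂ - projVec Ψ‖ := by
  have hQ₁ := isStarProjection_sub_projVec hΨ ⟨h₁proj, h₁herm⟩ h₁fix
  have hQ₂ := isStarProjection_sub_projVec hΨ ⟨h₂proj, h₂herm⟩ h₂fix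
  have hΩ : (p : ℂ) • P₁ + ((1 : ℂ) - p) • P₂ - projVec Ψ =
      (p : ℂ) • (P₁ - projVec Ψ) + ((1 : ℂ) - p) • (P₂ - projVec Ψ) := by module
  rw [hΩ, cstar_norm_def, cstar_norm_def, map_mul, map_mul, map_add, map_smul, map_smul]
  exact (hQ₁.map toEuclideanCLM).one_add_sqrt_norm_div_two_le_norm (hQ₂.map toEuclideanCLM)
    ((map_ne_zero_iff _ toEuclideanCLM.injective).mpr (sub_projVec_ne_zero h₁rank))
    ((map_ne_zero_iff _ toEuclideanCLM.injective).mpr (sub_projVec_ne_zero h₂rank)) hp.1 hp.2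
end

section
/- Define h(n) = 2^{-n} · Σ_{j=0}^{n} C(n,j) / (1 + (n − 2j)²). Then the sequence √n·h(n) is strictly increasing along even integers n ≥ 0 and strictly increasing along odd integers n ≥ 1; that is, √(n+2)·h(n+2) > √n·h(n) for every integer n ≥ 0. -/
/-!
Writing `(n + 2)² + 1 = (1 + (n + 2 - 2j)²) + 4j(n + 2 - j)` in each summand of `h (n + 2)` and
using `j (n + 2 - j) C(n + 2, j) = (n + 1)(n + 2) C(n, j - 1)` gives the recurrence
`((n + 2)² + 1) h (n + 2) = 1 + (n + 1)(n + 2) h n`. The claim thus becomes an inequality affine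
in `x = h n ∈ [0, 1]`; it is clear at `x = 0`, and at `x = 1` it reads
`n ((n + 2)² + 1)² < (n + 2) ((n + 1)(n + 2) + 1)²`.
-/

noncomputable def h (n : ℕ) : ℝ :=
  (∑ j ∈ Finset.range (n + 1), (n.choose j : ℝ) / (1 + ((n : ℝ) - 2 * j) ^ 2)) / 2 ^ n

open Finset

theorem Nat.cast_sum_range_choose {R : Type*} [CommSemiring R] (n : ℕ) :
    ∑ m ∈ range (n + 1), (n.choose m : R) = 2 ^ n := by
  rw [← Nat.cast_sum, Nat.sum_range_choose, Nat.cast_pow, Nat.cast_ofNat]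

theorem Nat.add_two_choose_succ_mul (n k : ℕ) :
    (n + 2).choose (k + 1) * ((k + 1) * (n + 1 - k)) = (n + 2) * (n + 1) * n.choose k := by
  calc (n + 2).choose (k + 1) * ((k + 1) * (n + 1 - k))
      = (n + 2) * ((n + 1).choose k * (n + 1 - k)) := by
        rw [← mul_assoc, ← Nat.add_one_mul_choose_eq]; ring
    _ = (n + 2) * (n + 1) * n.choose k := by rw [← Nat.choose_mul_succ_eq]; ring

theorem mul_lt_of_lt_of_nonneg_of_le_one {α : Type*} [Ring α] [LinearOrder α]
    [IsStrictOrderedRing α] {a b x : α} (hb : 0 < b) (hab : a < b) (hx₀ : 0 ≤ x)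
    (hx₁ : x ≤ 1) :
    a * x < b := by
  rcases le_or_gt a 0 with ha | ha
  · exact (mul_nonpos_of_nonpos_of_nonneg ha hx₀).trans_lt hb
  · exact (mul_le_of_le_one_right ha.le hx₁).trans_lt hab

theorem sqrt_mul_lt_sqrt_add_two_mul (t : ℝ) (ht : 0 ≤ t) :
    √t * ((t + 2) ^ 2 + 1) < √(t + 2) * ((t + 1) * (t + 2) + 1) := by
  rw [← Real.sqrt_sq (by positivity : 0 ≤ (t + 2) ^ 2 + 1),
    ← Real.sqrt_sq (by positivity : 0 ≤ (t + 1) * (t + 2) + 1), ← Real.sqrt_mul ht,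
    ← Real.sqrt_mul (by positivity)]
  exact Real.sqrt_lt_sqrt (by positivity) (by nlinarith [sq_nonneg t])

namespace h

theorem two_pow_mul (n : ℕ) :
    2 ^ n * h n = ∑ j ∈ range (n + 1), (n.choose j : ℝ) / (1 + ((n : ℝ) - 2 * j) ^ 2) :=
  mul_div_cancel₀ _ (by positivity)

theorem nonneg (n : ℕ) : 0 ≤ h n := by
  unfold h; positivity

theorem le_one (n : ℕ) : h n ≤ 1 := by
  rw [h, div_le_one (by positivity), ← Nat.cast_sum_range_choose n]
  refine sum_le_sum fun j _ => div_le_self (by positivity) ?_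
  nlinarith [sq_nonneg ((n : ℝ) - 2 * j)]

theorem summand_succ (n k : ℕ) (hk : k ≤ n + 1) :
    (((n : ℝ) + 2) ^ 2 + 1) * ((n + 2).choose (k + 1) / (1 + ((n : ℝ) + 2 - 2 * (k + 1)) ^ 2)) =
      (n + 2).choose (k + 1) + 4 * ((n : ℝ) + 1) * ((n : ℝ) + 2) *
        (n.choose k / (1 + ((n : ℝ) - 2 * k) ^ 2)) := by
  have hchoose : ((n + 2).choose (k + 1) : ℝ) * ((k + 1) * (n + 1 - k)) =
      (n + 2) * (n + 1) * n.choose k := by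
    exact_mod_cast Nat.add_two_choose_succ_mul n k
  have hD' : (n : ℝ) + 2 - 2 * (k + 1) = n - 2 * k := by ring
  rw [hD']
  field_simp
  linear_combination 4 * hchoose

theorem recurrence (n : ℕ) :
    (((n : ℝ) + 2) ^ 2 + 1) * h (n + 2) = 1 + ((n : ℝ) + 1) * ((n : ℝ) + 2) * h n := by
  suffices (((n : ℝ) + 2) ^ 2 + 1) * (2 ^ (n + 2) * h (n + 2)) =
      2 ^ (n + 2) + 4 * ((n : ℝ) + 1) * ((n : ℝ) + 2) * (2 ^ n * h n) by
    refine mul_left_cancel₀ (pow_ne_zero (n + 2) (two_ne_zero (α := ℝ))) ?_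
    linear_combination this
  calc (((n : ℝ) + 2) ^ 2 + 1) * (2 ^ (n + 2) * h (n + 2))
      = ∑ k ∈ range (n + 2), (((n : ℝ) + 2) ^ 2 + 1) *
          ((n + 2).choose (k + 1) / (1 + ((n : ℝ) + 2 - 2 * (k + 1)) ^ 2)) + 1 := by
        rw [two_pow_mul, mul_sum, sum_range_succ', Nat.choose_zero_right]
        push_cast
        congr 1
        field_simp
        ring
    _ = ∑ k ∈ range (n + 2), ((n + 2).choose (k + 1) : ℝ) + 1 +
          4 * ((n : ℝ) + 1) * ((n : ℝ) + 2) *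
            ∑ k ∈ range (n + 2), (n.choose k : ℝ) / (1 + ((n : ℝ) - 2 * k) ^ 2) := by
        rw [sum_congr rfl fun k hk => summand_succ n k (Nat.lt_succ_iff.mp (mem_range.mp hk)),
          sum_add_distrib, ← mul_sum]
        ring
    _ = 2 ^ (n + 2) + 4 * ((n : ℝ) + 1) * ((n : ℝ) + 2) * (2 ^ n * h n) := by
        rw [← Nat.cast_sum_range_choose (n + 2), sum_range_succ' _ (n + 2),
          sum_range_succ (fun k => (n.choose k : ℝ) / (1 + ((n : ℝ) - 2 * k) ^ 2)) (n + 1),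
          Nat.choose_succ_self, two_pow_mul]
        simp

end h

theorem stmt_3 (n : ℕ) :
    Real.sqrt n * h n < Real.sqrt (n + 2) * h (n + 2) := by
  have hrec := h.recurrence n
  set c : ℝ := ((n : ℝ) + 2) ^ 2 + 1
  set d : ℝ := ((n : ℝ) + 1) * ((n : ℝ) + 2)
  have hslope : √(n : ℝ) * c - √((n : ℝ) + 2) * d < √((n : ℝ) + 2) := by
    linarith [sqrt_mul_lt_sqrt_add_two_mul n n.cast_nonneg]
  refine lt_of_mul_lt_mul_right ?_ (by positivity : 0 ≤ c)
  calc √(n : ℝ) * h n * c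
      = (√(n : ℝ) * c - √((n : ℝ) + 2) * d) * h n + √((n : ℝ) + 2) * d * h n := by ring
    _ < √((n : ℝ) + 2) + √((n : ℝ) + 2) * d * h n := by
        gcongr
        exact mul_lt_of_lt_of_nonneg_of_le_one (by positivity) hslope (h.nonneg n) (h.le_one n)
    _ = √((n : ℝ) + 2) * h (n + 2) * c := by
        linear_combination -√((n : ℝ) + 2) * hrec
end

section
/- The infinite series Σ_{k=0}^{∞} 2/(1 + (2k+1)²) converges to (π/2)·tanh(π/2). -/
/-!
Since `tan θ = cot θ - 2 cot 2θ`, the function `π tan (π z / 2)` is the difference of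
`π cot (π z / 2)` and `2π cot (π z)`. In their Mittag-Leffler expansions the poles at the even
integers cancel, leaving `π tan (π z / 2) = ∑ₖ 4z / ((2k+1)² - z²)`. At `z = y i` the tangent
becomes `i tanh (π y / 2)`, and `y = 1` gives the theorem.
-/

open Real

lemma hasSum_cotTerm {z : ℂ} (hz : z ∈ Complex.integerComplement) :
    HasSum (cotTerm z) (π * Complex.cot (π * z) - 1 / z) :=
  (summable_cotTerm hz).hasSum_iff_tendsto_nat.mpr (tendsto_logDeriv_euler_cot_sub hz)

namespace Complex

lemma div_two_mem_integerComplement {z : ℂ} (hz : z ∈ integerComplement) :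
    z / 2 ∈ integerComplement := by
  rintro ⟨n, hn⟩
  exact hz ⟨2 * n, by push_cast; rw [hn]; ring⟩

lemma ofReal_mul_I_mem_integerComplement {y : ℝ} (hy : y ≠ 0) :
    (y : ℂ) * I ∈ integerComplement := by
  rintro ⟨n, hn⟩
  exact hy (by simpa using congrArg im hn.symm)

lemma tan_eq_cot_sub_two_mul_cot_two_mul {θ : ℂ} (hsin : sin θ ≠ 0) (hcos : cos θ ≠ 0) :
    tan θ = cot θ - 2 * cot (2 * θ) := by
  rw [tan_eq_sin_div_cos, cot_eq_cos_div_sin, cot_eq_cos_div_sin, sin_two_mul, cos_two_mul']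
  field_simp
  ring

lemma hasSum_tan_pi_mul_div_two {z : ℂ} (hz : z ∈ integerComplement) :
    HasSum (fun k : ℕ => 1 / (z - (2 * k + 1)) + 1 / (z + (2 * k + 1)))
      (-(π / 2 * tan (π * z / 2))) := by
  have hall := hasSum_cotTerm hz
  -- `cotTerm z n` has its poles at `±(n + 1)`
  have hevenPoles : HasSum (fun k => cotTerm z (2 * k + 1))
      ((π * cot (π * (z / 2)) - 1 / (z / 2)) / 2) := by
    refine ((hasSum_cotTerm (div_two_mem_integerComplement hz)).div_const 2).congr_fun
      fun k => ?_
    have h1 := integerComplement_add_ne_zero hz (2 * k + 2)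
    have h2 := integerComplement_add_ne_zero hz (-(2 * k + 2))
    simp only [cotTerm]
    push_cast at h1 h2 ⊢
    rw [← sub_eq_add_neg] at h2
    field_simp
    ring
  have hoddPoles : HasSum (fun k => cotTerm z (2 * k)) _ :=
    (hall.summable.comp_injective (mul_right_injective₀ two_ne_zero)).hasSum
  have hsum := (hoddPoles.even_add_odd hevenPoles).unique hall
  have hsin : sin (π * z / 2) ≠ 0 := by
    simpa [mul_div_assoc] using sin_pi_mul_ne_zero (div_two_mem_integerComplement hz)
  have hcos : cos (π * z / 2) ≠ 0 := by
    intro h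
    apply sin_pi_mul_ne_zero hz
    rw [show (π : ℂ) * z = 2 * (π * z / 2) by ring, sin_two_mul, h, mul_zero]
  have htan := tan_eq_cot_sub_two_mul_cot_two_mul hsin hcos
  rw [show 2 * (π * z / 2) = π * z by ring] at htan
  rw [← mul_div_assoc] at hsum
  convert hoddPoles using 1
  · ext k
    simp only [cotTerm]
    push_cast
    ring
  · rw [htan]
    linear_combination -hsum

end Complex

open Complex in
theorem Real.hasSum_pi_mul_tanh_pi_mul_div_two (y : ℝ) :
    HasSum (fun k : ℕ => 4 * y / ((2 * k + 1) ^ 2 + y ^ 2)) (π * Real.tanh (π * y / 2)) := by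
  rcases eq_or_ne y 0 with rfl | hy
  · simp [hasSum_zero]
  have hz := ofReal_mul_I_mem_integerComplement hy
  have h := (hasSum_tan_pi_mul_div_two hz).mul_left (2 * I)
  rw [show (π : ℂ) * (y * I) / 2 = ((π * y / 2 : ℝ) : ℂ) * I by push_cast; ring, tan_mul_I,
    ← ofReal_tanh] at h
  have hval : ((π * Real.tanh (π * y / 2) : ℝ) : ℂ)
      = 2 * I * -(π / 2 * (Real.tanh (π * y / 2) * I)) := by
    rw [ofReal_mul]
    linear_combination (π * Real.tanh (π * y / 2) : ℂ) * I_sq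
  rw [← hasSum_ofReal, hval]
  refine h.congr_fun fun k => ?_
  have hk : ((2 * k + 1) ^ 2 + y ^ 2 : ℂ) ≠ 0 := by
    exact_mod_cast (by positivity : (2 * k + 1) ^ 2 + y ^ 2 ≠ 0)
  have h1 : (y : ℂ) * I - (2 * k + 1) ≠ 0 := by
    simpa [sub_eq_add_neg] using integerComplement_add_ne_zero hz (-(2 * k + 1))
  have h2 : (y : ℂ) * I + (2 * k + 1) ≠ 0 := by
    simpa using integerComplement_add_ne_zero hz (2 * k + 1)
  push_cast
  field_simp
  linear_combination (-4 * y * (2 * k + 1) ^ 2 : ℂ) * I_sq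

theorem stmt_7 :
    HasSum (fun k : ℕ => 2 / (1 + (2 * (k : ℝ) + 1) ^ 2))
      (π / 2 * Real.tanh (π / 2)) := by
  have h := (Real.hasSum_pi_mul_tanh_pi_mul_div_two 1).div_const 2
  simp only [mul_one, one_pow] at h
  rw [mul_div_right_comm] at h
  refine h.congr_fun fun k => ?_
  ring
end

section
/- Define h(n) = 2^{-n} · Σ_{j=0}^{n} C(n,j)/(1 + (n−2j)²). For all odd integers n ≥ 1, 1/2 ≤ √n·h(n) ≤ √(π/2)·tanh(π/2), and for all even integers n ≥ 2, 3√2/5 ≤ √n·h(n) ≤ √(π/2)·coth(π/2). -/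
/-!
Writing `h n = 2⁻ⁿ S n`, the identity `((n+2)² + 1) / (1 + k²) = 1 + 4 j (n+2-j) / (1 + k²)` for
`k = n + 2 - 2j`, together with `C(n+2, j) j (n+2-j) = (n+2)(n+1) C(n, j-1)`, gives the recurrence
`((n+2)² + 1) h(n+2) = 1 + (n+2)(n+1) h n`.

Lower bounds: the recurrence propagates `L ≤ √n h n` from `n` to `n + 2` whenever `0 ≤ L ≤ 1`;
the key inequality is AM-GM, `√n √(n+2) ≤ n + 1`. The constants are `√1 h 1 = 1/2` and
`√2 h 2 = 3√2/5`.

Upper bounds: for a pair `f' = g`, `g' = f` (here `sinh, cosh`), the integrals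
`∫₀^{π/2} f(x) sinⁿ x dx` satisfy the same recurrence with `1` replaced by `g(π/2)`, so
`h n g(π/2)` equals such an integral once it does for the first index of the right parity.
Bounding `f` by `f(π/2)` reduces everything to the Wallis integrals `Wₙ = ∫₀^{π/2} sinⁿ`,
and `n Wₙ² ≤ n Wₙ Wₙ₋₁ = π/2`.
-/

open Real

open Finset intervalIntegral

lemma cast_choose_add_two_mul (n i : ℕ) :
    ((n + 2).choose (i + 1) : ℝ) * ((i + 1) * (n + 1 - i)) = (n + 2) * (n + 1) * n.choose i := by
  rcases le_or_gt i (n + 1) with hi | hi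
  · have h₁ := Nat.add_one_mul_choose_eq (n + 1) i
    have h₂ := Nat.choose_mul_succ_eq n i
    rw [← Nat.cast_inj (R := ℝ)] at h₁ h₂
    push_cast [Nat.cast_sub hi] at h₁ h₂
    linear_combination (-((n : ℝ) + 1 - i)) * h₁ - ((n : ℝ) + 2) * h₂
  · rw [Nat.choose_eq_zero_of_lt (by omega : n + 2 < i + 1), Nat.choose_eq_zero_of_lt hi.le]
    simp

lemma sum_choose_mul_div_add_two (n : ℕ) :
    ∑ j ∈ range (n + 2 + 1),
        ((n + 2).choose j : ℝ) * (j * (n + 2 - j)) / (1 + ((n : ℝ) + 2 - 2 * j) ^ 2) =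
      ((n : ℝ) + 2) * (n + 1) * ∑ i ∈ range (n + 1), (n.choose i : ℝ) / (1 + ((n : ℝ) - 2 * i) ^ 2) := by
  rw [Finset.sum_range_succ', Finset.mul_sum, Finset.sum_range_succ _ (n + 1)]
  have hlast : (n : ℝ) + 2 - ((n + 1 + 1 : ℕ) : ℝ) = 0 := by push_cast; ring
  simp only [hlast, Nat.cast_zero, mul_zero, zero_mul, zero_div, add_zero]
  refine Finset.sum_congr rfl fun i _ => ?_
  rw [mul_div_assoc', ← cast_choose_add_two_mul]
  push_cast
  ring_nf

lemma sum_choose_div_add_two (n : ℕ) :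
    (((n : ℝ) + 2) ^ 2 + 1) *
        ∑ j ∈ range (n + 2 + 1), ((n + 2).choose j : ℝ) / (1 + (((n + 2 : ℕ) : ℝ) - 2 * j) ^ 2) =
      2 ^ (n + 2) + 4 * ((n : ℝ) + 2) * (n + 1) *
        ∑ i ∈ range (n + 1), (n.choose i : ℝ) / (1 + ((n : ℝ) - 2 * i) ^ 2) := by
  have hterm : ∀ j ∈ range (n + 2 + 1), (((n : ℝ) + 2) ^ 2 + 1) *
      (((n + 2).choose j : ℝ) / (1 + (((n + 2 : ℕ) : ℝ) - 2 * j) ^ 2)) = (n + 2).choose j +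
        4 * (((n + 2).choose j : ℝ) * (j * (n + 2 - j)) / (1 + ((n : ℝ) + 2 - 2 * j) ^ 2)) := by
    intro j _
    push_cast
    field_simp
    ring
  rw [mul_sum, sum_congr rfl hterm, sum_add_distrib, ← mul_sum, sum_choose_mul_div_add_two,
    ← Nat.cast_sum, Nat.sum_range_choose]
  push_cast
  ring

lemma h_add_two (n : ℕ) :
    (((n : ℝ) + 2) ^ 2 + 1) * h (n + 2) = 1 + ((n : ℝ) + 2) * ((n : ℝ) + 1) * h n := by
  have hsum := sum_choose_div_add_two n
  simp only [h, pow_add]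
  field_simp
  linear_combination hsum

lemma h_one : h 1 = 1 / 2 := by
  norm_num [h, Finset.sum_range_succ]

lemma h_two : h 2 = 3 / 5 := by
  norm_num [h, Finset.sum_range_succ]

lemma le_sqrt_mul_h_add_two {L : ℝ} (hL₀ : 0 ≤ L) (hL₁ : L ≤ 1) {n : ℕ} (hn : 1 ≤ n)
    (hL : L ≤ √n * h n) : L ≤ √(n + 2 : ℕ) * h (n + 2) := by
  set b := √(n : ℝ)
  set a := √((n + 2 : ℕ) : ℝ)
  have hb₁ : 1 ≤ b := one_le_sqrt.mpr (by exact_mod_cast hn)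
  have hb₂ : b ^ 2 = n := sq_sqrt (Nat.cast_nonneg n)
  have ha₂ : a ^ 2 = n + 2 := by rw [sq_sqrt (Nat.cast_nonneg _)]; push_cast; ring
  have hba : b ≤ a := sqrt_le_sqrt (by push_cast; linarith)
  have hrec : (a ^ 4 + 1) * h (n + 2) = 1 + a ^ 2 * (b ^ 2 + 1) * h n := by
    rw [show a ^ 4 = (a ^ 2) ^ 2 by ring, ha₂, hb₂, h_add_two]
  -- AM-GM, using `a ^ 2 = b ^ 2 + 2`
  have hamgm : a * b - b ^ 2 ≤ 1 := by nlinarith [sq_nonneg (a - b)]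
  have hbracket : a ^ 3 * b * (a - b) + b - a ^ 3 ≤ b := by
    nlinarith [mul_le_mul_of_nonneg_left hamgm (by positivity : 0 ≤ a ^ 3)]
  have hkey : L * (a ^ 3 * b * (a - b) + b - a ^ 3) ≤ a * b := calc
    _ ≤ L * b := mul_le_mul_of_nonneg_left hbracket hL₀
    _ ≤ 1 * b := by gcongr
    _ ≤ a * b := by gcongr; linarith
  have hstep : a ^ 3 * (b ^ 2 + 1) * L ≤ a ^ 3 * (b ^ 2 + 1) * (b * h n) :=
    mul_le_mul_of_nonneg_left hL (by positivity)
  refine le_of_mul_le_mul_left ?_ (by positivity : 0 < b * (a ^ 4 + 1))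
  nlinarith

lemma le_sqrt_mul_h_add_two_mul {L : ℝ} (hL₀ : 0 ≤ L) (hL₁ : L ≤ 1) {m : ℕ} (hm : 1 ≤ m)
    (hL : L ≤ √m * h m) (k : ℕ) : L ≤ √(m + 2 * k : ℕ) * h (m + 2 * k) := by
  induction k with
  | zero => simpa using hL
  | succ k ih =>
    rw [show m + 2 * (k + 1) = m + 2 * k + 2 by ring]
    exact le_sqrt_mul_h_add_two hL₀ hL₁ (by omega) ih

section SinPowIntegrals

variable {f g : ℝ → ℝ}

lemma integral_mul_sin_pow_zero (hg : ∀ x, HasDerivAt g (f x) x) (hf : Continuous f) :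
    ∫ x in 0..π / 2, f x * sin x ^ 0 = g (π / 2) - g 0 := by
  simp only [pow_zero, mul_one]
  exact integral_eq_sub_of_hasDerivAt (fun x _ => hg x) (hf.intervalIntegrable _ _)

lemma integral_mul_sin_pow_one (hf : ∀ x, HasDerivAt f (g x) x)
    (hg : ∀ x, HasDerivAt g (f x) x) :
    ∫ x in 0..π / 2, f x * sin x ^ 1 = (g (π / 2) + f 0) / 2 := by
  have hcont : Continuous f := continuous_iff_continuousAt.mpr fun x => (hf x).continuousAt
  have hderiv : ∀ x, HasDerivAt (fun x => (g x * sin x - f x * cos x) / 2) (f x * sin x ^ 1) x := by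
    intro x
    refine ((((hg x).mul (hasDerivAt_sin x)).sub
      ((hf x).mul (hasDerivAt_cos x))).div_const 2).congr_deriv ?_
    ring
  rw [integral_eq_sub_of_hasDerivAt (fun x _ => hderiv x)
    ((hcont.mul (continuous_sin.pow 1)).intervalIntegrable _ _)]
  simp only [sin_pi_div_two, cos_pi_div_two, sin_zero, cos_zero]
  ring

lemma integral_mul_sin_pow_add_two (hf : ∀ x, HasDerivAt f (g x) x)
    (hg : ∀ x, HasDerivAt g (f x) x) (n : ℕ) :
    (((n : ℝ) + 2) ^ 2 + 1) * ∫ x in 0..π / 2, f x * sin x ^ (n + 2) =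
      g (π / 2) + ((n : ℝ) + 2) * (n + 1) * ∫ x in 0..π / 2, f x * sin x ^ n := by
  have hcont : Continuous f := continuous_iff_continuousAt.mpr fun x => (hf x).continuousAt
  have hderiv : ∀ x, HasDerivAt
      (fun x => g x * sin x ^ (n + 2) - (n + 2) * (f x * sin x ^ (n + 1) * cos x))
      ((((n : ℝ) + 2) ^ 2 + 1) * (f x * sin x ^ (n + 2)) -
        ((n : ℝ) + 2) * (n + 1) * (f x * sin x ^ n)) x := by
    intro x
    refine (((hg x).mul ((hasDerivAt_sin x).pow (n + 2))).sub
      ((((hf x).mul ((hasDerivAt_sin x).pow (n + 1))).mul (hasDerivAt_cos x)).const_mul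
        ((n : ℝ) + 2))).congr_deriv ?_
    simp only [Pi.mul_apply, Pi.pow_apply, Nat.add_sub_cancel]
    push_cast
    linear_combination -f x * sin x ^ n * ((n : ℝ) + 2) * (n + 1) * sin_sq_add_cos_sq x
  have hint : ∀ m : ℕ, IntervalIntegrable (fun x => f x * sin x ^ m) MeasureTheory.volume 0 (π / 2) :=
    fun m => (hcont.mul (continuous_sin.pow m)).intervalIntegrable _ _
  have hftc := integral_eq_sub_of_hasDerivAt (fun x _ => hderiv x)
    (((hint (n + 2)).const_mul _).sub ((hint n).const_mul _))
  rw [integral_sub ((hint (n + 2)).const_mul _) ((hint n).const_mul _), integral_const_mul,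
    integral_const_mul] at hftc
  simp only [sin_pi_div_two, cos_pi_div_two, sin_zero, one_pow, mul_one, mul_zero, sub_zero,
    zero_pow (Nat.succ_ne_zero _), zero_mul] at hftc
  linear_combination hftc

lemma h_mul_eq_integral (hf : ∀ x, HasDerivAt f (g x) x) (hg : ∀ x, HasDerivAt g (f x) x)
    {m : ℕ} (hm : h m * g (π / 2) = ∫ x in 0..π / 2, f x * sin x ^ m) (k : ℕ) :
    h (m + 2 * k) * g (π / 2) = ∫ x in 0..π / 2, f x * sin x ^ (m + 2 * k) := by
  induction k with
  | zero => simpa using hm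
  | succ k ih =>
    rw [show m + 2 * (k + 1) = m + 2 * k + 2 by ring]
    have hne : (((m + 2 * k : ℕ) : ℝ) + 2) ^ 2 + 1 ≠ 0 := by positivity
    apply mul_left_cancel₀ hne
    linear_combination g (π / 2) * h_add_two (m + 2 * k)
      - integral_mul_sin_pow_add_two hf hg (m + 2 * k)
      + (((m + 2 * k : ℕ) : ℝ) + 2) * (((m + 2 * k : ℕ) : ℝ) + 1) * ih

lemma integral_mul_sin_pow_le (hf : Continuous f) (hmono : MonotoneOn f (Set.Icc 0 (π / 2)))
    (n : ℕ) : ∫ x in 0..π / 2, f x * sin x ^ n ≤ f (π / 2) * ∫ x in 0..π / 2, sin x ^ n := by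
  rw [← integral_const_mul]
  refine integral_mono_on pi_div_two_pos.le
    ((hf.mul (continuous_sin.pow n)).intervalIntegrable _ _)
    ((continuous_const.mul (continuous_sin.pow n)).intervalIntegrable _ _) fun x hx => ?_
  have hsin : 0 ≤ sin x := sin_nonneg_of_nonneg_of_le_pi hx.1 (by linarith [hx.2, pi_pos])
  exact mul_le_mul_of_nonneg_right (hmono hx ⟨pi_div_two_pos.le, le_rfl⟩ hx.2) (pow_nonneg hsin n)

end SinPowIntegrals

lemma integral_sin_pow_succ_mul (n : ℕ) :
    ((n : ℝ) + 1) * (∫ x in 0..π, sin x ^ (n + 1)) * ∫ x in 0..π, sin x ^ n = 2 * π := by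
  induction n with
  | zero =>
    simp only [Nat.cast_zero, zero_add, pow_one, pow_zero, integral_sin, integral_one, cos_zero,
      cos_pi]
    ring
  | succ n ih =>
    rw [integral_sin_pow]
    simp only [sin_zero, sin_pi, zero_pow (Nat.succ_ne_zero _), zero_mul, sub_zero, zero_div,
      zero_add]
    rw [← ih]
    push_cast
    field_simp
    ring

lemma integral_sin_pow_half (n : ℕ) :
    ∫ x in 0..π / 2, sin x ^ n = 1 / 2 * ∫ x in 0..π, sin x ^ n := by
  rw [← EulerSine.integral_cos_pow_eq]
  simpa [cos_pi_div_two_sub] using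
    integral_comp_sub_left (a := 0) (b := π / 2) (fun x => cos x ^ n) (π / 2)

lemma sqrt_mul_integral_sin_pow_le {n : ℕ} (hn : 1 ≤ n) :
    √n * ∫ x in 0..π / 2, sin x ^ n ≤ √(π / 2) := by
  obtain ⟨m, rfl⟩ : ∃ m, n = m + 1 := ⟨n - 1, by omega⟩
  have hprod := integral_sin_pow_succ_mul m
  have hanti : ∫ x in 0..π, sin x ^ (m + 1) ≤ ∫ x in 0..π, sin x ^ m := integral_sin_pow_succ_le m
  have hpos : 0 < ∫ x in 0..π, sin x ^ (m + 1) := integral_sin_pow_pos _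
  rw [integral_sin_pow_half, ← sqrt_sq (by positivity : 0 ≤ 1 / 2 * ∫ x in 0..π, sin x ^ (m + 1)),
    ← sqrt_mul (Nat.cast_nonneg _)]
  refine sqrt_le_sqrt ?_
  push_cast
  nlinarith [mul_le_mul_of_nonneg_left hanti
    (by positivity : 0 ≤ ((m : ℝ) + 1) * ∫ x in 0..π, sin x ^ (m + 1))]

lemma sqrt_mul_h_le {f g : ℝ → ℝ} (hf : Continuous f) (hmono : MonotoneOn f (Set.Icc 0 (π / 2)))
    (hf₀ : 0 ≤ f (π / 2)) (hg₀ : 0 < g (π / 2)) {n : ℕ} (hn : 1 ≤ n)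
    (heq : h n * g (π / 2) = ∫ x in 0..π / 2, f x * sin x ^ n) :
    √n * h n ≤ √(π / 2) * (f (π / 2) / g (π / 2)) := calc
  √n * h n = √n * (∫ x in 0..π / 2, f x * sin x ^ n) / g (π / 2) := by
    rw [← heq]; field_simp
  _ ≤ √n * (f (π / 2) * ∫ x in 0..π / 2, sin x ^ n) / g (π / 2) := by
    gcongr; exact integral_mul_sin_pow_le hf hmono n
  _ = f (π / 2) / g (π / 2) * (√n * ∫ x in 0..π / 2, sin x ^ n) := by ring
  _ ≤ f (π / 2) / g (π / 2) * √(π / 2) := by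
    gcongr; exact sqrt_mul_integral_sin_pow_le hn
  _ = √(π / 2) * (f (π / 2) / g (π / 2)) := by ring

theorem stmt_9 (n : ℕ) :
    (Odd n → 1 ≤ n →
      1 / 2 ≤ Real.sqrt n * h n ∧ Real.sqrt n * h n ≤ Real.sqrt (π / 2) * Real.tanh (π / 2)) ∧
    (Even n → 2 ≤ n →
      3 * Real.sqrt 2 / 5 ≤ Real.sqrt n * h n ∧
        Real.sqrt n * h n ≤ Real.sqrt (π / 2) * (Real.cosh (π / 2) / Real.sinh (π / 2))) := by
  have hsinh₀ : 0 < sinh (π / 2) := sinh_pos_iff.mpr pi_div_two_pos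
  refine ⟨fun hodd hn => ?_, fun heven hn => ?_⟩
  · obtain ⟨k, rfl⟩ : ∃ k, n = 1 + 2 * k := by obtain ⟨k, rfl⟩ := hodd; exact ⟨k, by ring⟩
    have hbase : h 1 * cosh (π / 2) = ∫ x in 0..π / 2, sinh x * sin x ^ 1 := by
      rw [integral_mul_sin_pow_one hasDerivAt_sinh hasDerivAt_cosh, h_one, sinh_zero]; ring
    refine ⟨le_sqrt_mul_h_add_two_mul (by norm_num) (by norm_num) le_rfl (by simp [h_one]) k, ?_⟩
    rw [tanh_eq_sinh_div_cosh]
    exact sqrt_mul_h_le continuous_sinh (sinh_strictMono.monotone.monotoneOn _) hsinh₀.le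
      (cosh_pos _) hn (h_mul_eq_integral hasDerivAt_sinh hasDerivAt_cosh hbase k)
  · obtain ⟨k, rfl⟩ : ∃ k, n = 0 + 2 * k := by obtain ⟨k, rfl⟩ := heven; exact ⟨k, by ring⟩
    have hbase : h 0 * sinh (π / 2) = ∫ x in 0..π / 2, cosh x * sin x ^ 0 := by
      rw [integral_mul_sin_pow_zero hasDerivAt_sinh continuous_cosh, sinh_zero]; simp [h]
    have hsqrt2 : √2 ^ 2 = 2 := sq_sqrt zero_le_two
    have hlower : 3 * √2 / 5 ≤ √(2 + 2 * (k - 1) : ℕ) * h (2 + 2 * (k - 1)) :=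
      le_sqrt_mul_h_add_two_mul (by positivity) (by nlinarith [sqrt_nonneg 2]) (by norm_num)
        (by rw [h_two]; norm_num; linarith) (k - 1)
    rw [show 2 + 2 * (k - 1) = 0 + 2 * k by omega] at hlower
    exact ⟨hlower, sqrt_mul_h_le continuous_cosh
      (cosh_strictMonoOn.monotoneOn.mono Set.Icc_subset_Ici_self) (cosh_pos _).le hsinh₀ (by omega)
      (h_mul_eq_integral hasDerivAt_cosh hasDerivAt_sinh hbase k)⟩
end

section
/- Define h(n) = 2^{-n} · Σ_{j=0}^{n} C(n,j)/(1 + (n−2j)²) and ν(n) = (1 − √(1 − h(n−3)))/2. Then lim_{n→∞} √(2n+1)·ν(2n+1) = (√(2π)/8)·coth(π/2) and lim_{n→∞} √(2n)·ν(2n) = (√(2π)/8)·tanh(π/2). -/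
open Real Filter

noncomputable def ν (n : ℕ) : ℝ := (1 - Real.sqrt (1 - h (n - 3))) / 2

/-!
Writing `1 / (1 + k²) = ∫₀^∞ e^{-t} cos (k t) dt` and summing the binomial expansion of
`(2 cos t)ⁿ` gives `h n = ∫₀^∞ e^{-t} cosⁿ t dt`. Since `cos (t + π) = -cos t`, the part of this
integral beyond `π` is `(-1)ⁿ e^{-π} h n`, and folding `[0, π]` at `π / 2` gives
`(1 - (-1)ⁿ e^{-π}) h n = ∫₀^{π/2} (e^{-t} + (-1)ⁿ e^{t-π}) cosⁿ t dt`.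
All the mass of `cosⁿ` concentrates at `t = 0`, where `√n ∫₀^{π/2} cosⁿ → √(π/2)` (Wallis), so
`√n h n` tends to `√(π/2) (1 + e^{-π}) / (1 - e^{-π}) = √(π/2) coth (π/2)` along even `n` and to
`√(π/2) tanh (π/2)` along odd `n`. Finally `ν (n + 3) = h n / (2 (1 + √(1 - h n))) ~ h n / 4`.
-/

open MeasureTheory Set Topology

theorem exp_neg_mul_cos_eq_re (k t : ℝ) :
    exp (-t) * cos (k * t) = (Complex.exp ((-1 + k * Complex.I) * t)).re := by
  rw [Complex.exp_re]
  congr 2 <;> simp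

theorem integrableOn_exp_neg_mul_cos (k : ℝ) :
    IntegrableOn (fun t => exp (-t) * cos (k * t)) (Ioi 0) := by
  simp_rw [exp_neg_mul_cos_eq_re]
  exact (integrableOn_exp_mul_complex_Ioi (by simp) 0).re

theorem integral_exp_neg_mul_cos (k : ℝ) :
    ∫ t in Ioi 0, exp (-t) * cos (k * t) = 1 / (1 + k ^ 2) := by
  simp_rw [exp_neg_mul_cos_eq_re]
  have hre := integral_re (integrableOn_exp_mul_complex_Ioi (a := -1 + k * Complex.I) (by simp) 0)
  simp only [RCLike.re_to_complex] at hre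
  rw [hre, integral_exp_mul_complex_Ioi (by simp)]
  simp [Complex.div_re, Complex.normSq_apply, ← sq, add_comm]

theorem integrableOn_exp_neg_mul_cos_pow (n : ℕ) :
    IntegrableOn (fun t => exp (-t) * cos t ^ n) (Ioi 0) := by
  refine (integrableOn_exp_neg_Ioi 0).mul_bdd (c := 1)
    (Continuous.aestronglyMeasurable (by fun_prop)) (Eventually.of_forall fun t => ?_)
  simpa [abs_pow] using pow_le_one₀ (abs_nonneg _) (abs_cos_le_one t)

open Complex in
theorem sum_choose_mul_cos (n : ℕ) (t : ℝ) :
    ∑ j ∈ Finset.range (n + 1), (n.choose j : ℝ) * Real.cos ((n - 2 * j) * t) =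
      (2 * Real.cos t) ^ n := by
  have hterm : ∀ j ∈ Finset.range (n + 1), (n.choose j : ℝ) * Real.cos ((n - 2 * j) * t) =
      (cexp (-t * I) ^ j * cexp (t * I) ^ (n - j) * n.choose j).re := by
    intro j hj
    have hjn : j ≤ n := Nat.lt_succ_iff.mp (Finset.mem_range.mp hj)
    rw [← Complex.exp_nat_mul, ← Complex.exp_nat_mul, ← Complex.exp_add,
      show (j : ℂ) * (-t * I) + ((n - j : ℕ) : ℂ) * (t * I) =
          (((n - 2 * j) * t : ℝ) : ℂ) * I by push_cast [Nat.cast_sub hjn]; ring,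
      ← ofReal_natCast, re_mul_ofReal, exp_ofReal_mul_I_re, mul_comm]
  rw [Finset.sum_congr rfl hterm, ← re_sum, ← add_pow, add_comm, ← two_cos, ← ofReal_ofNat,
    ← ofReal_cos, ← ofReal_mul, ← ofReal_pow, ofReal_re]

theorem h_eq_integral (n : ℕ) : h n = ∫ t in Ioi 0, exp (-t) * cos t ^ n := by
  have hsum : ∑ j ∈ Finset.range (n + 1), (n.choose j : ℝ) / (1 + ((n : ℝ) - 2 * j) ^ 2) =
      ∫ t in Ioi 0, exp (-t) * (2 * cos t) ^ n := by
    simp_rw [← sum_choose_mul_cos, Finset.mul_sum, div_eq_mul_one_div (n.choose _ : ℝ),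
      ← integral_exp_neg_mul_cos, ← integral_const_mul]
    rw [← integral_finsetSum _ fun j _ => (integrableOn_exp_neg_mul_cos _).const_mul _]
    refine setIntegral_congr_fun measurableSet_Ioi fun t _ => Finset.sum_congr rfl fun j _ => ?_
    ring
  rw [h, hsum, ← integral_div]
  refine setIntegral_congr_fun measurableSet_Ioi fun t _ => ?_
  rw [mul_pow]
  field_simp

theorem integral_Ioi_pi_exp_neg_mul_cos_pow (n : ℕ) :
    ∫ t in Ioi π, exp (-t) * cos t ^ n = (-1) ^ n * exp (-π) * h n := by
  have hshift := (measurePreserving_add_right volume π).setIntegral_preimage_emb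
    (measurableEmbedding_addRight π) (fun t => exp (-t) * cos t ^ n) (Ioi π)
  rw [← hshift, preimage_add_const_Ioi, sub_self, h_eq_integral, ← integral_const_mul]
  refine setIntegral_congr_fun measurableSet_Ioi fun t _ => ?_
  rw [cos_add_pi, neg_pow, neg_add, exp_add]
  ring

theorem integral_zero_pi_exp_neg_mul_cos_pow (n : ℕ) :
    ∫ t in (0)..π, exp (-t) * cos t ^ n =
      ∫ t in (0)..(π / 2), (exp (-t) + (-1) ^ n * exp (t - π)) * cos t ^ n := by
  have hcont : Continuous fun t => exp (-t) * cos t ^ n := by fun_prop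
  have hcont' : Continuous fun t => exp (-(π - t)) * cos (π - t) ^ n := by fun_prop
  have hreflect := intervalIntegral.integral_comp_sub_left
    (fun t => exp (-t) * cos t ^ n) (a := 0) (b := π / 2) π
  rw [sub_zero, sub_half] at hreflect
  rw [← intervalIntegral.integral_add_adjacent_intervals (b := π / 2)
    (hcont.intervalIntegrable _ _) (hcont.intervalIntegrable _ _), ← hreflect,
    ← intervalIntegral.integral_add (hcont.intervalIntegrable _ _)
      (hcont'.intervalIntegrable _ _)]
  refine intervalIntegral.integral_congr fun t _ => ?_
  rw [cos_pi_sub, neg_pow, neg_sub]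
  ring

theorem h_mul_one_sub (n : ℕ) :
    h n * (1 - (-1) ^ n * exp (-π)) = ∫ t in (0)..π, exp (-t) * cos t ^ n := by
  have hsplit := setIntegral_union (Ioc_disjoint_Ioi le_rfl) measurableSet_Ioi
    ((integrableOn_exp_neg_mul_cos_pow n).mono_set Ioc_subset_Ioi_self)
    ((integrableOn_exp_neg_mul_cos_pow n).mono_set (Ioi_subset_Ioi pi_pos.le))
  rw [Ioc_union_Ioi_eq_Ioi pi_pos.le, ← h_eq_integral, integral_Ioi_pi_exp_neg_mul_cos_pow,
    ← intervalIntegral.integral_of_le pi_pos.le] at hsplit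
  linear_combination hsplit

noncomputable def wallisIntegral (n : ℕ) : ℝ := ∫ t in (0)..(π / 2), cos t ^ n

theorem wallisIntegral_succ_succ (n : ℕ) :
    wallisIntegral (n + 2) = (n + 1) / (n + 2) * wallisIntegral n := by
  simpa [wallisIntegral] using integral_cos_pow (a := 0) (b := π / 2) (n := n)

theorem wallisIntegral_pos (n : ℕ) : 0 < wallisIntegral n :=
  intervalIntegral.intervalIntegral_pos_of_pos_on ((continuous_cos.pow n).intervalIntegrable _ _)
    (fun _ ht => pow_pos (cos_pos_of_mem_Ioo ⟨by linarith [ht.1, pi_pos], ht.2⟩) n)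
    (by positivity)

theorem wallisIntegral_succ_le (n : ℕ) : wallisIntegral (n + 1) ≤ wallisIntegral n :=
  intervalIntegral.integral_mono_on (by positivity) ((continuous_cos.pow _).intervalIntegrable _ _)
    ((continuous_cos.pow _).intervalIntegrable _ _) fun t ht =>
      pow_le_pow_of_le_one (cos_nonneg_of_mem_Icc ⟨by linarith [ht.1, pi_pos], ht.2⟩)
        (cos_le_one t) n.le_succ

theorem succ_mul_wallisIntegral_mul_wallisIntegral_succ (n : ℕ) :
    (n + 1) * wallisIntegral n * wallisIntegral (n + 1) = π / 2 := by
  induction n with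
  | zero => simp [wallisIntegral]
  | succ k ih =>
    rw [wallisIntegral_succ_succ, ← ih]
    push_cast
    field_simp
    ring

theorem tendsto_sqrt_mul_wallisIntegral :
    Tendsto (fun n : ℕ => √n * wallisIntegral n) atTop (𝓝 √(π / 2)) := by
  have hlower : ∀ n : ℕ, n / (n + 1) * (π / 2) ≤ n * wallisIntegral n ^ 2 := by
    intro n
    rw [← succ_mul_wallisIntegral_mul_wallisIntegral_succ, sq]
    have := wallisIntegral_succ_le n
    have := wallisIntegral_pos n
    field_simp
    gcongr
  have hupper : ∀ n : ℕ, n * wallisIntegral n ^ 2 ≤ π / 2 := by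
    rintro (_ | m)
    · simpa using pi_div_two_pos.le
    · rw [← succ_mul_wallisIntegral_mul_wallisIntegral_succ m]
      push_cast
      have hdiff : 0 ≤ (m + 1) * wallisIntegral (m + 1) *
          (wallisIntegral m - wallisIntegral (m + 1)) :=
        mul_nonneg (mul_pos m.cast_add_one_pos (wallisIntegral_pos (m + 1))).le
          (sub_nonneg.2 (wallisIntegral_succ_le m))
      linear_combination hdiff
  have hlim : Tendsto (fun n : ℕ => n * wallisIntegral n ^ 2) atTop (𝓝 (π / 2)) := by
    refine tendsto_of_tendsto_of_tendsto_of_le_of_le ?_ tendsto_const_nhds hlower hupper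
    simpa using (tendsto_natCast_div_add_atTop (1 : ℝ)).mul_const (π / 2)
  refine hlim.sqrt.congr fun n => ?_
  rw [sqrt_mul n.cast_nonneg, sqrt_sq (wallisIntegral_pos n).le]

theorem integral_sin_mul_cos_pow (n : ℕ) :
    ∫ t in (0)..(π / 2), sin t * cos t ^ n = 1 / (n + 1) := by
  simpa [integral_pow] using integral_sin_pow_odd_mul_cos_pow (a := 0) (b := π / 2) 0 n

theorem tendsto_sqrt_div_succ : Tendsto (fun n : ℕ => √n / (n + 1)) atTop (𝓝 0) := by
  have hinv : Tendsto (fun n : ℕ => (√n)⁻¹) atTop (𝓝 0) :=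
    tendsto_inv_atTop_zero.comp (tendsto_sqrt_atTop.comp tendsto_natCast_atTop_atTop)
  refine squeeze_zero (fun n => by positivity) (fun n => ?_) hinv
  rcases n.eq_zero_or_pos with rfl | hn
  · simp
  · have hs : 0 < √(n : ℝ) := sqrt_pos.2 (by exact_mod_cast hn)
    rw [div_le_iff₀ (by positivity), inv_mul_eq_div, le_div_iff₀ hs,
      mul_self_sqrt n.cast_nonneg]
    linarith

theorem abs_integral_mul_cos_pow_sub_le {f : ℝ → ℝ} {L : ℝ} (hf : Continuous f)
    (hL : ∀ t ∈ Icc 0 (π / 2), |f t - f 0| ≤ L * t) (n : ℕ) :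
    |(∫ t in (0)..(π / 2), f t * cos t ^ n) - f 0 * wallisIntegral n| ≤
      L * (π / 2) / (n + 1) := by
  rw [wallisIntegral, ← intervalIntegral.integral_const_mul, ← intervalIntegral.integral_sub
    ((by fun_prop : Continuous fun t => f t * cos t ^ n).intervalIntegrable _ _)
    ((by fun_prop : Continuous fun t => f 0 * cos t ^ n).intervalIntegrable _ _),
    show L * (π / 2) / (n + 1) = L * (π / 2) * (1 / (n + 1)) by ring,
    ← integral_sin_mul_cos_pow, ← intervalIntegral.integral_const_mul, ← Real.norm_eq_abs]
  refine intervalIntegral.norm_integral_le_of_norm_le pi_div_two_pos.le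
    (Eventually.of_forall fun t ht => ?_) ((by fun_prop : Continuous fun t =>
      L * (π / 2) * (sin t * cos t ^ n)).intervalIntegrable (μ := volume) _ _)
  have ht' : t ∈ Icc 0 (π / 2) := Ioc_subset_Icc_self ht
  have hcos : 0 ≤ cos t ^ n :=
    pow_nonneg (cos_nonneg_of_mem_Icc ⟨by linarith [ht.1, pi_pos], ht.2⟩) n
  have hL₀ : 0 ≤ L := nonneg_of_mul_nonneg_left ((abs_nonneg _).trans (hL t ht')) ht.1
  -- Jordan's inequality turns the weight `t` into `sin t`, which integrates against `cosⁿ t`.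
  have hsin : t ≤ π / 2 * sin t := by
    have := mul_le_sin ht'.1 ht'.2
    rw [div_mul_eq_mul_div, div_le_iff₀ pi_pos] at this
    linarith
  calc ‖f t * cos t ^ n - f 0 * cos t ^ n‖ = |f t - f 0| * cos t ^ n := by
        rw [← sub_mul, norm_mul, Real.norm_eq_abs, Real.norm_of_nonneg hcos]
    _ ≤ L * t * cos t ^ n := by gcongr; exact hL t ht'
    _ ≤ L * (π / 2 * sin t) * cos t ^ n := by gcongr
    _ = L * (π / 2) * (sin t * cos t ^ n) := by ring

theorem tendsto_sqrt_mul_integral_mul_cos_pow {f : ℝ → ℝ} {L : ℝ} (hf : Continuous f)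
    (hL : ∀ t ∈ Icc 0 (π / 2), |f t - f 0| ≤ L * t) :
    Tendsto (fun n : ℕ => √n * ∫ t in (0)..(π / 2), f t * cos t ^ n) atTop
      (𝓝 (f 0 * √(π / 2))) := by
  have herr : Tendsto (fun n : ℕ => √n *
      ((∫ t in (0)..(π / 2), f t * cos t ^ n) - f 0 * wallisIntegral n)) atTop (𝓝 0) := by
    refine squeeze_zero_norm (fun n => ?_)
      (by simpa using tendsto_sqrt_div_succ.const_mul (L * (π / 2)))
    rw [norm_mul, Real.norm_eq_abs, Real.norm_eq_abs, abs_of_nonneg (sqrt_nonneg _)]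
    calc √n * |(∫ t in (0)..(π / 2), f t * cos t ^ n) - f 0 * wallisIntegral n|
        ≤ √n * (L * (π / 2) / (n + 1)) := by
          gcongr; exact abs_integral_mul_cos_pow_sub_le hf hL n
      _ = L * (π / 2) * (√n / (n + 1)) := by ring
  simpa [mul_sub, mul_left_comm] using herr.add (tendsto_sqrt_mul_wallisIntegral.const_mul (f 0))

theorem abs_exp_neg_add_mul_exp_sub_pi_sub_le (σ : ℝ) {t : ℝ} (ht₀ : 0 ≤ t)
    (ht : t ≤ π) :
    |(exp (-t) + σ * exp (t - π)) - (exp (-0) + σ * exp (0 - π))| ≤ (1 + |σ|) * t := by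
  have hexp : 1 - exp (-t) ≤ t := by linarith [add_one_le_exp (-t)]
  have hexp₀ : 0 ≤ 1 - exp (-t) := sub_nonneg.2 (exp_le_one_iff.2 (by linarith))
  have h₁ : |exp (-t) - 1| ≤ t := by rw [abs_sub_comm, abs_of_nonneg hexp₀]; exact hexp
  have h₂ : |exp (t - π) - exp (-π)| ≤ t := by
    have hfac : exp (t - π) - exp (-π) = exp (t - π) * (1 - exp (-t)) := by
      rw [mul_sub, mul_one, ← exp_add]; ring_nf
    have hle : exp (t - π) ≤ 1 := exp_le_one_iff.2 (by linarith)
    rw [hfac, abs_of_nonneg (by positivity)]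
    nlinarith [exp_pos (t - π)]
  calc |(exp (-t) + σ * exp (t - π)) - (exp (-0) + σ * exp (0 - π))|
      = |(exp (-t) - 1) + σ * (exp (t - π) - exp (-π))| := by
        rw [neg_zero, exp_zero, zero_sub]; ring_nf
    _ ≤ |exp (-t) - 1| + |σ| * |exp (t - π) - exp (-π)| := by
        rw [← abs_mul]; exact abs_add_le _ _
    _ ≤ t + |σ| * t := by gcongr
    _ = (1 + |σ|) * t := by ring

theorem tendsto_sqrt_mul_h_comp {φ : ℕ → ℕ} {σ : ℝ} (hφ : Tendsto φ atTop atTop)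
    (hσ : ∀ m, (-1 : ℝ) ^ φ m = σ) :
    Tendsto (fun m => √(φ m : ℝ) * h (φ m)) atTop
      (𝓝 (√(π / 2) * ((1 + σ * exp (-π)) / (1 - σ * exp (-π))))) := by
  have hσ₁ : |σ| = 1 := by rw [← hσ 0, abs_pow, abs_neg, abs_one, one_pow]
  have hden : 1 - σ * exp (-π) ≠ 0 := by
    have : |σ * exp (-π)| < 1 := by
      rw [abs_mul, hσ₁, one_mul, abs_of_pos (exp_pos _), exp_lt_one_iff]
      linarith [pi_pos]
    intro h0
    rw [← sub_eq_zero.1 h0, abs_one] at this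
    exact lt_irrefl _ this
  have hlim := ((tendsto_sqrt_mul_integral_mul_cos_pow
    (f := fun t => exp (-t) + σ * exp (t - π)) (by fun_prop)
    fun t ht => abs_exp_neg_add_mul_exp_sub_pi_sub_le σ ht.1 (by linarith [ht.2, pi_pos])).comp
      hφ).div_const (1 - σ * exp (-π))
  convert hlim using 2 with m
  · rw [Function.comp_apply, ← hσ m, ← integral_zero_pi_exp_neg_mul_cos_pow,
      ← h_mul_one_sub, mul_div_assoc, mul_div_cancel_right₀ _ (hσ m ▸ hden)]
  · simp only [neg_zero, exp_zero, zero_sub]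
    ring

theorem h_le_one (n : ℕ) : h n ≤ 1 := by
  rw [h, div_le_one (by positivity)]
  calc ∑ j ∈ Finset.range (n + 1), (n.choose j : ℝ) / (1 + ((n : ℝ) - 2 * j) ^ 2)
      ≤ ∑ j ∈ Finset.range (n + 1), (n.choose j : ℝ) :=
        Finset.sum_le_sum fun j _ => div_le_self (by positivity) (by nlinarith)
    _ = 2 ^ n := by exact_mod_cast Nat.sum_range_choose n

theorem one_sub_sqrt_one_sub {x : ℝ} (hx : x ≤ 1) : 1 - √(1 - x) = x / (1 + √(1 - x)) := by
  have hs := sq_sqrt (sub_nonneg.2 hx)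
  field_simp
  linear_combination -hs

theorem tendsto_sqrt_mul_ν_add_three {φ : ℕ → ℕ} {c : ℝ} (hφ : Tendsto φ atTop atTop)
    (hc : Tendsto (fun m => √(φ m : ℝ) * h (φ m)) atTop (𝓝 c)) :
    Tendsto (fun m => √((φ m : ℝ) + 3) * ν (φ m + 3)) atTop (𝓝 (c / 4)) := by
  have hφ' : Tendsto (fun m => (φ m : ℝ)) atTop atTop := tendsto_natCast_atTop_atTop.comp hφ
  have hratio : Tendsto (fun m => √(((φ m : ℝ) + 3) / φ m)) atTop (𝓝 1) := by
    have hlim : Tendsto (fun m => 1 + 3 * (φ m : ℝ)⁻¹) atTop (𝓝 1) := by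
      simpa using (hφ'.inv_tendsto_atTop.const_mul 3).const_add 1
    refine (sqrt_one ▸ hlim.sqrt).congr' ?_
    filter_upwards [hφ'.eventually_gt_atTop 0] with m hm
    field_simp
  have hzero : Tendsto (fun m => h (φ m)) atTop (𝓝 0) := by
    have hinv := tendsto_inv_atTop_zero.comp (tendsto_sqrt_atTop.comp hφ')
    refine (mul_zero c ▸ hc.mul hinv).congr' ?_
    filter_upwards [hφ'.eventually_gt_atTop 0] with m hm
    have : √(φ m : ℝ) ≠ 0 := (sqrt_pos.2 hm).ne'
    simp only [Function.comp_apply]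
    field_simp
  have hden : Tendsto (fun m => 2 * (1 + √(1 - h (φ m)))) atTop (𝓝 4) := by
    convert ((hzero.const_sub 1).sqrt.const_add 1).const_mul 2 using 2
    norm_num
  refine (one_mul c ▸ (hratio.mul hc).div hden four_ne_zero).congr' ?_
  filter_upwards [hφ'.eventually_gt_atTop 0] with m hm
  rw [Pi.div_apply, ν, Nat.add_sub_cancel, one_sub_sqrt_one_sub (h_le_one _), sqrt_div' _ hm.le]
  have : √(φ m : ℝ) ≠ 0 := (sqrt_pos.2 hm).ne'
  field_simp

theorem cosh_div_sinh_eq (x : ℝ) :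
    cosh x / sinh x = (1 + exp (-2 * x)) / (1 - exp (-2 * x)) := by
  have hsq : exp (-2 * x) = exp (-x) * exp (-x) := by rw [← exp_add]; ring_nf
  have hinv : exp (-x) * exp x = 1 := by rw [← exp_add, neg_add_cancel, exp_zero]
  rw [cosh_eq, sinh_eq, div_div_div_cancel_right₀ two_ne_zero,
    ← mul_div_mul_left _ _ (exp_ne_zero (-x)), hsq]
  congr 1 <;> linear_combination hinv

theorem tanh_eq_one_sub_exp_div (x : ℝ) :
    tanh x = (1 - exp (-2 * x)) / (1 + exp (-2 * x)) := by
  have hsq : exp (-2 * x) = exp (-x) * exp (-x) := by rw [← exp_add]; ring_nf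
  have hinv : exp (-x) * exp x = 1 := by rw [← exp_add, neg_add_cancel, exp_zero]
  rw [tanh_eq_sinh_div_cosh, cosh_eq, sinh_eq, div_div_div_cancel_right₀ two_ne_zero,
    ← mul_div_mul_left _ _ (exp_ne_zero (-x)), hsq]
  congr 1 <;> linear_combination hinv

theorem stmt_11 :
    Tendsto (fun n : ℕ => Real.sqrt (2 * n + 1) * ν (2 * n + 1)) atTop
      (nhds (Real.sqrt (2 * π) / 8 * (Real.cosh (π / 2) / Real.sinh (π / 2)))) ∧
    Tendsto (fun n : ℕ => Real.sqrt (2 * n) * ν (2 * n)) atTop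
      (nhds (Real.sqrt (2 * π) / 8 * Real.tanh (π / 2))) := by
  have hconst : √(2 * π) / 8 = √(π / 2) / 4 := by
    rw [show 2 * π = 2 ^ 2 * (π / 2) by ring, sqrt_mul (by norm_num), sqrt_sq zero_le_two]
    ring
  have hexp : exp (-2 * (π / 2)) = exp (-π) := by ring_nf
  have htwo : Tendsto (fun m : ℕ => 2 * m) atTop atTop :=
    tendsto_id.const_mul_atTop' two_pos
  have htwo' : Tendsto (fun m : ℕ => 2 * m + 1) atTop atTop :=
    tendsto_atTop_mono (fun m => Nat.le_succ _) htwo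
  have heven := tendsto_sqrt_mul_ν_add_three htwo
    (tendsto_sqrt_mul_h_comp htwo (σ := 1) fun m => by rw [pow_mul]; norm_num)
  have hodd := tendsto_sqrt_mul_ν_add_three htwo'
    (tendsto_sqrt_mul_h_comp htwo' (σ := -1) fun m => by rw [pow_succ, pow_mul]; norm_num)
  constructor
  · rw [← tendsto_add_atTop_iff_nat 1]
    convert heven using 2 with m
    · push_cast; ring_nf
    · rw [cosh_div_sinh_eq, hexp, hconst]; ring
  · rw [← tendsto_add_atTop_iff_nat 2]
    convert hodd using 2 with m
    · push_cast; ring_nf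
    · rw [tanh_eq_one_sub_exp_div, hexp, hconst]; ring
end

section
/- Let n ≥ 3 be an integer and let W_n = (1/√n)·Σ_{u ∈ Bₙ¹} |u⟩ be the n-qubit W state, where Bₙ¹ is the set of strings in {0,1}ⁿ of Hamming weight 1. Let P₁ = Σ_{u∈Bₙ¹} |u⟩⟨u|, and let P₂ = Σ_{x∈{0,1}^{n−1}} |α_x⟩⟨α_x| ⊗ |β_x⟩⟨β_x|, where |α_x⟩ = 2^{-(n−1)/2} Σ_{y∈{0,1}^{n−1}} (−1)^{x·y} |y⟩ and |β_x⟩ = (|1⟩ + (n−1−2|x|)|0⟩)/√(1 + (n−1−2|x|)²). Then tr(P₁P₂) = n − 1 − (n−2)·h(n−1), where h(m) = 2^{-m} Σ_{j=0}^{m} C(m,j)/(1 + (m−2j)²). -/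
/-! Since `|α_x(y)|² = 2^{-(n-1)}`, the diagonal entry of `P₂` at `(y, b)` is the average of
`|β_x(b)|²` over `x`, independent of `y`. For `b = 1` this average is `h(n-1)` once the `x` are
grouped by weight, and the averages for `b = 0` and `b = 1` add up to `1` because each `β_x` is a
unit vector. As `P₁` is the diagonal projector onto the weight-one strings, `n - 1` of which end
in `0` and one in `1`, the trace is `(n - 1)(1 - h(n-1)) + h(n-1)`. -/

open Matrix

/-- Hamming weight of a bit string. -/
def wt {m : ℕ} (x : Fin m → Fin 2) : ℕ := ∑ i, (x i).val

/-- Basis index for `(ℂ²)^{⊗n}`, split as the first `n-1` qubits and the last qubit. -/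
abbrev Idx (n : ℕ) := (Fin (n - 1) → Fin 2) × Fin 2

/-- The test projector `P₁` (Pauli-Z test for the W state). -/
def P1 (n : ℕ) : Matrix (Idx n) (Idx n) ℂ :=
  fun p q => if p = q ∧ wt p.1 + (p.2 : ℕ) = 1 then 1 else 0

/-- The vector `|α_x⟩`. -/
noncomputable def alpha (n : ℕ) (x y : Fin (n - 1) → Fin 2) : ℂ :=
  (-1 : ℂ) ^ (∑ i, (x i : ℕ) * (y i : ℕ)) / (Real.sqrt (2 ^ (n - 1)) : ℝ)

/-- The vector `|β_x⟩`. -/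
noncomputable def beta (n : ℕ) (x : Fin (n - 1) → Fin 2) (b : Fin 2) : ℂ :=
  (if b = 1 then 1 else ((n : ℂ) - 1 - 2 * (wt x : ℕ))) /
    (Real.sqrt (1 + ((n : ℝ) - 1 - 2 * (wt x : ℕ)) ^ 2) : ℝ)

/-- The test projector `P₂ = Σ_x |α_x⟩⟨α_x| ⊗ |β_x⟩⟨β_x|`. -/
noncomputable def P2 (n : ℕ) : Matrix (Idx n) (Idx n) ℂ :=
  fun p q => ∑ x : Fin (n - 1) → Fin 2,
    alpha n x p.1 * star (alpha n x q.1) * (beta n x p.2 * star (beta n x q.2))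

open Finset

lemma wt_eq_card_filter {m : ℕ} (x : Fin m → Fin 2) : wt x = #{i | x i = 1} := by
  rw [card_filter, wt]
  refine sum_congr rfl fun i _ => ?_
  generalize x i = b
  fin_cases b <;> rfl

lemma sum_comp_wt {m : ℕ} {M : Type*} [AddCommMonoid M] (F : ℕ → M) :
    ∑ x : Fin m → Fin 2, F (wt x) = ∑ j ∈ range (m + 1), m.choose j • F j := by
  have h_powerset :
      ∑ x : Fin m → Fin 2, F (wt x) = ∑ s ∈ (univ : Finset (Fin m)).powerset, F #s :=
    sum_nbij' (fun x => univ.filter (x · = 1)) (fun s i => if i ∈ s then 1 else 0)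
      (by simp) (by simp)
      (fun x _ => funext fun i => by
        simp only [mem_filter, mem_univ, true_and]
        generalize x i = b
        fin_cases b <;> rfl)
      (fun s _ => by ext; simp) (fun x _ => congrArg F (wt_eq_card_filter x))
  rw [h_powerset, sum_powerset_apply_card, card_univ, Fintype.card_fin]

lemma card_filter_wt_eq (m j : ℕ) : #{x : Fin m → Fin 2 | wt x = j} = m.choose j := by
  rw [card_filter, sum_comp_wt fun i => if i = j then 1 else 0]
  simp only [smul_eq_mul, mul_ite, mul_one, mul_zero, sum_ite_eq', mem_range]
  split_ifs with hj
  · rfl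
  · exact (Nat.choose_eq_zero_of_lt (by omega)).symm

lemma trace_P1_mul (n : ℕ) (M : Matrix (Idx n) (Idx n) ℂ) :
    (P1 n * M).trace = ∑ p : Idx n, if wt p.1 + (p.2 : ℕ) = 1 then M p p else 0 := by
  simp [Matrix.trace, Matrix.mul_apply, P1, ite_and]

def bias (n : ℕ) (x : Fin (n - 1) → Fin 2) : ℝ := (n : ℝ) - 1 - 2 * (wt x : ℕ)

lemma normSq_alpha (n : ℕ) (x y : Fin (n - 1) → Fin 2) :
    Complex.normSq (alpha n x y) = (2 ^ (n - 1))⁻¹ := by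
  rw [alpha, Complex.normSq_div, map_pow, Complex.normSq_neg, map_one, one_pow,
    Complex.normSq_ofReal, Real.mul_self_sqrt (by positivity), one_div]

lemma normSq_beta (n : ℕ) (x : Fin (n - 1) → Fin 2) (b : Fin 2) :
    Complex.normSq (beta n x b) = (if b = 1 then 1 else bias n x ^ 2) / (1 + bias n x ^ 2) := by
  have h_real : beta n x b = ((if b = 1 then 1 else bias n x) / √(1 + bias n x ^ 2) : ℝ) := by
    rw [beta, bias]; split_ifs <;> push_cast <;> rfl
  rw [h_real, Complex.normSq_ofReal, div_mul_div_comm, Real.mul_self_sqrt (by positivity)]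
  split_ifs <;> ring

noncomputable def betaWeight (n : ℕ) (b : Fin 2) : ℝ :=
  (∑ x : Fin (n - 1) → Fin 2, Complex.normSq (beta n x b)) / 2 ^ (n - 1)

lemma P2_apply_self (n : ℕ) (y : Fin (n - 1) → Fin 2) (b : Fin 2) :
    P2 n (y, b) (y, b) = betaWeight n b := by
  simp only [P2, Complex.star_def, Complex.mul_conj, normSq_alpha, betaWeight, sum_div]
  push_cast
  exact sum_congr rfl fun x _ => by ring

lemma betaWeight_zero_add_one (n : ℕ) : betaWeight n 0 + betaWeight n 1 = 1 := by
  have h_pointwise (x : Fin (n - 1) → Fin 2) :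
      Complex.normSq (beta n x 0) + Complex.normSq (beta n x 1) = 1 := by
    rw [normSq_beta, normSq_beta, if_neg zero_ne_one, if_pos rfl, ← add_div, add_comm,
      div_self (by positivity)]
  simp [betaWeight, ← add_div, ← sum_add_distrib, h_pointwise]

lemma betaWeight_one {n : ℕ} (hn : 1 ≤ n) : betaWeight n 1 = h (n - 1) := by
  simp only [betaWeight, normSq_beta, if_pos, one_div, bias]
  rw [sum_comp_wt fun j => (1 + ((n : ℝ) - 1 - 2 * j) ^ 2)⁻¹, h, Nat.cast_sub hn, Nat.cast_one]
  simp [nsmul_eq_mul, div_eq_mul_inv]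

lemma trace_P1_mul_P2 (n : ℕ) :
    (P1 n * P2 n).trace = ((n - 1 : ℕ) : ℂ) * betaWeight n 0 + betaWeight n 1 := by
  rw [trace_P1_mul, Fintype.sum_prod_type]
  simp only [Fin.sum_univ_two]
  simp only [P2_apply_self, Fin.val_zero, Fin.val_one, add_zero, Nat.add_eq_right,
    sum_add_distrib, sum_ite, sum_const_zero, sum_const, nsmul_eq_mul]
  rw [card_filter_wt_eq, card_filter_wt_eq, Nat.choose_one_right, Nat.choose_zero_right,
    Nat.cast_one, one_mul]

theorem stmt_13 (n : ℕ) (hn : 3 ≤ n) :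
    (P1 n * P2 n).trace = (n : ℂ) - 1 - ((n : ℂ) - 2) * (h (n - 1) : ℝ) := by
  have hn1 : 1 ≤ n := by omega
  have h_weight_zero : betaWeight n 0 = 1 - h (n - 1) := by
    rw [← betaWeight_one hn1, ← betaWeight_zero_add_one n, add_sub_cancel_right]
  rw [trace_P1_mul_P2, h_weight_zero, betaWeight_one hn1, Nat.cast_sub hn1]
  push_cast
  ring
end

section
/- Let n = 3 and define q = ‖P̄₁P̄₂P̄₁‖ where P₁ = |001⟩⟨001| + |010⟩⟨010| + |100⟩⟨100|, P₂ = Σ_{x∈{0,1}²} |α_x⟩⟨α_x| ⊗ |β_x⟩⟨β_x| (with |α_x⟩, |β_x⟩ as in the W-state verification protocol for n = 3), and P̄ᵢ = Pᵢ − |W₃⟩⟨W₃| with |W₃⟩ = (|001⟩+|010⟩+|100⟩)/√3. Then q = 2/5. -/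
/-!
Since `W₃` lies in the range of `P₁`, `P̄₁` annihilates `|W₃⟩⟨W₃|`, so the operator equals
`P̄₁ P₂ P̄₁ = Σₓ |P̄₁(αₓ ⊗ βₓ)⟩⟨P̄₁(αₓ ⊗ βₓ)|`. Each `αₓ ⊗ βₓ` has equal amplitudes on `|010⟩` and
`|100⟩`, and `P̄₁` maps such a vector to a multiple of `u = 2|001⟩ - |010⟩ - |100⟩`; summing the
four squared coefficients gives `P̄₁ P̄₂ P̄₁ = |u⟩⟨u| / 15`. As `⟨u|u⟩ = 6`, this self-adjoint `M`
satisfies `M² = (2/5) M`, and the C⋆-identity gives `‖M‖ = 2/5`.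
-/

open Matrix
open scoped Matrix.Norms.L2Operator

open Matrix

/-- The `n`-qubit W state as a vector in `(ℂ²)^{⊗n}`. -/
noncomputable def Wstate (n : ℕ) : Idx n → ℂ :=
  fun p => if wt p.1 + (p.2 : ℕ) = 1 then (1 / Real.sqrt n : ℝ) else 0

/-- The rank-one projector `|W_n⟩⟨W_n|`. -/
noncomputable def projW (n : ℕ) : Matrix (Idx n) (Idx n) ℂ :=
  fun p q => Wstate n p * star (Wstate n q)

theorem norm_eq_of_isSelfAdjoint_of_mul_self_eq_smul {𝕜 E : Type*} [NormedField 𝕜]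
    [NonUnitalNormedRing E] [StarRing E] [CStarRing E] [NormedSpace 𝕜 E]
    {a : E} (ha : IsSelfAdjoint a) (h0 : a ≠ 0) {c : 𝕜} (h : a * a = c • a) : ‖a‖ = ‖c‖ := by
  have key : ‖a‖ * ‖a‖ = ‖c‖ * ‖a‖ := by
    rw [← CStarRing.norm_star_mul_self, ha.star_eq, h, norm_smul]
  exact mul_right_cancel₀ (norm_ne_zero_iff.mpr h0) key

theorem sum_finTwoArrow {α M : Type*} [Fintype α] [AddCommMonoid M]
    (f : (Fin 2 → α) → M) : ∑ x, f x = ∑ a, ∑ b, f ![a, b] := by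
  rw [← (finTwoArrowEquiv α).symm.sum_comp, Fintype.sum_prod_type]
  rfl

theorem forall_finTwoArrow {α : Type*} {P : (Fin 2 → α) → Prop} :
    (∀ x, P x) ↔ ∀ a b, P ![a, b] :=
  (finTwoArrowEquiv α).symm.forall_congr_right.symm.trans Prod.forall

namespace Matrix

variable {ι α : Type*} [CommSemiring α] [StarRing α]

theorem isHermitian_vecMulVec_star (v : ι → α) : (vecMulVec v (star v)).IsHermitian := by
  rw [IsHermitian, conjTranspose_vecMulVec, star_star]

theorem vecMulVec_smul_star_smul (c : α) (v : ι → α) :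
    vecMulVec (c • v) (star (c • v)) = (c * star c) • vecMulVec v (star v) := by
  rw [star_smul, smul_vecMulVec, vecMulVec_smul, smul_smul, mul_comm]

variable [Fintype ι]

theorem IsHermitian.mul_vecMulVec_star_mul {A : Matrix ι ι α} (hA : A.IsHermitian) (v : ι → α) :
    A * vecMulVec v (star v) * A = vecMulVec (A *ᵥ v) (star (A *ᵥ v)) := by
  rw [mul_vecMulVec, vecMulVec_mul, star_mulVec, hA.eq]

theorem vecMulVec_star_mul_self (v : ι → α) :
    vecMulVec v (star v) * vecMulVec v (star v) = (star v ⬝ᵥ v) • vecMulVec v (star v) := by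
  rw [vecMulVec_mul_vecMulVec, vecMulVec_smul]

end Matrix

theorem P1_isHermitian (n : ℕ) : (P1 n).IsHermitian := by
  ext p q
  by_cases hpq : p = q
  · subst hpq; simp [P1]
  · simp [P1, hpq, Ne.symm hpq]

theorem P1_mulVec (n : ℕ) (v : Idx n → ℂ) :
    P1 n *ᵥ v = fun p => if wt p.1 + (p.2 : ℕ) = 1 then v p else 0 := by
  ext p
  simp [P1, mulVec, dotProduct, ite_and]

theorem projW_isHermitian (n : ℕ) : (projW n).IsHermitian := isHermitian_vecMulVec_star _

theorem mul_projW {n : ℕ} (A : Matrix (Idx n) (Idx n) ℂ) :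
    A * projW n = vecMulVec (A *ᵥ Wstate n) (star (Wstate n)) :=
  mul_vecMulVec _ _ _

noncomputable def alphaBeta (n : ℕ) (x : Fin (n - 1) → Fin 2) : Idx n → ℂ :=
  fun p => alpha n x p.1 * beta n x p.2

theorem P2_eq_sum (n : ℕ) :
    P2 n = ∑ x, vecMulVec (alphaBeta n x) (star (alphaBeta n x)) := by
  ext p q
  simp only [P2, alphaBeta, Matrix.sum_apply, vecMulVec_apply, Pi.star_apply, star_mul']
  exact Finset.sum_congr rfl fun _ _ => by ring

def e001 : Idx 3 := (![0, 0], 1)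
def e010 : Idx 3 := (![0, 1], 0)
def e100 : Idx 3 := (![1, 0], 0)

def uVec : Idx 3 → ℂ := fun p =>
  if wt p.1 + (p.2 : ℕ) = 1 then (if p.2 = 1 then 2 else -1) else 0

local notation "P̄₁" => P1 3 - projW 3
local notation "P̄₂" => P2 3 - projW 3

theorem sum_ite_weight_one (f : Idx 3 → ℂ) :
    ∑ p, (if wt p.1 + (p.2 : ℕ) = 1 then f p else 0) = f e001 + f e010 + f e100 := by
  simp [Fintype.sum_prod_type, sum_finTwoArrow, wt, Fin.sum_univ_two, e001, e010, e100]

theorem projW_three_mulVec (v : Idx 3 → ℂ) :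
    projW 3 *ᵥ v =
      fun p => if wt p.1 + (p.2 : ℕ) = 1 then (v e001 + v e010 + v e100) / 3 else 0 := by
  have h3 : (Real.sqrt 3 : ℂ) * Real.sqrt 3 = 3 := by
    exact_mod_cast Real.mul_self_sqrt (by norm_num : (0 : ℝ) ≤ 3)
  have hW : ∀ p, star (Wstate 3 p) * v p =
      if wt p.1 + (p.2 : ℕ) = 1 then v p / Real.sqrt 3 else 0 := fun p => by
    unfold Wstate; split_ifs <;> simp [div_eq_inv_mul]
  ext p
  simp only [mulVec, dotProduct, projW, mul_assoc, ← Finset.mul_sum, hW, sum_ite_weight_one]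
  unfold Wstate
  split_ifs
  · push_cast; rw [← h3]; field_simp
  · simp

theorem P1bar_mulVec {v : Idx 3 → ℂ} (hv : v e010 = v e100) :
    P̄₁ *ᵥ v = ((v e001 - v e010) / 3) • uVec := by
  rw [sub_mulVec, projW_three_mulVec, P1_mulVec]
  simp only [e001, e010, e100] at hv ⊢
  ext ⟨x, b⟩
  revert x b
  simp [forall_finTwoArrow, Fin.forall_fin_two, uVec, wt, ← hv]
  constructorm* _ ∧ _ <;> ring

theorem P1bar_mulVec_Wstate : P̄₁ *ᵥ Wstate 3 = 0 := by
  rw [P1bar_mulVec (by simp [Wstate, e010, e100, wt])]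
  simp [Wstate, e001, e010, wt]

theorem P1bar_isHermitian : (P̄₁).IsHermitian :=
  (P1_isHermitian 3).sub (projW_isHermitian 3)

theorem P1bar_mul_projW : P̄₁ * projW 3 = 0 := by
  rw [mul_projW, P1bar_mulVec_Wstate, zero_vecMulVec]

theorem alphaBeta_three_e010_eq_e100 : ∀ x, alphaBeta 3 x e010 = alphaBeta 3 x e100 := by
  simp [forall_finTwoArrow, Fin.forall_fin_two, alphaBeta, alpha, beta, wt, e010, e100]
  norm_num

theorem sum_P1bar_alphaBeta_coeff :
    ∑ x, (alphaBeta 3 x e001 - alphaBeta 3 x e010) / 3 *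
      star ((alphaBeta 3 x e001 - alphaBeta 3 x e010) / 3) = 1 / 15 := by
  have h5 : (Real.sqrt 5 : ℂ) ^ 2 = 5 := by
    exact_mod_cast Real.sq_sqrt (by norm_num : (0 : ℝ) ≤ 5)
  have h5' : (Real.sqrt 5 : ℂ) ≠ 0 := by exact_mod_cast (Real.sqrt_pos.mpr (by norm_num)).ne'
  simp [sum_finTwoArrow, Fin.sum_univ_two, alphaBeta, alpha, beta, wt, e001, e010]
  norm_num
  field_simp
  rw [h5]; norm_num

theorem star_uVec_dotProduct_uVec : star uVec ⬝ᵥ uVec = 6 := by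
  simp [dotProduct, Fintype.sum_prod_type, sum_finTwoArrow, Fin.sum_univ_two, uVec, wt,
    map_ofNat]
  norm_num

theorem P1bar_mul_P2bar_mul_P1bar :
    P̄₁ * P̄₂ * P̄₁ = (1 / 15 : ℂ) • vecMulVec uVec (star uVec) := by
  rw [mul_sub (P̄₁), sub_mul, P1bar_mul_projW, zero_mul, sub_zero, P2_eq_sum, Finset.mul_sum,
    Finset.sum_mul]
  simp_rw [P1bar_isHermitian.mul_vecMulVec_star_mul, P1bar_mulVec (alphaBeta_three_e010_eq_e100 _),
    vecMulVec_smul_star_smul]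
  rw [← Finset.sum_smul, sum_P1bar_alphaBeta_coeff]

theorem stmt_14 :
    ‖(P1 3 - projW 3) * (P2 3 - projW 3) * (P1 3 - projW 3)‖ = 2 / 5 := by
  set M := (1 / 15 : ℂ) • vecMulVec uVec (star uVec)
  have hM : IsSelfAdjoint M := .smul (by simp [IsSelfAdjoint]) (isHermitian_vecMulVec_star uVec)
  have hM0 : M ≠ 0 := fun h => by
    simpa [M, vecMulVec_apply, uVec, e001, wt] using congrFun (congrFun h e001) e001
  have hMM : M * M = (2 / 5 : ℂ) • M := by
    rw [smul_mul_smul_comm, vecMulVec_star_mul_self, star_uVec_dotProduct_uVec, smul_smul,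
      smul_smul]
    norm_num
  rw [P1bar_mul_P2bar_mul_P1bar, norm_eq_of_isSelfAdjoint_of_mul_self_eq_smul hM hM0 hMM]
  norm_num
end

section
/- Let μ and μ′ be partitions of a positive integer n with at most d parts, and suppose μ is majorized by μ′. Let D_λ denote the dimension of the irreducible polynomial representation of GL(d,ℂ) (equivalently U(d)) with highest weight λ, and d_λ the dimension of the irreducible representation of the symmetric group S_n labeled by λ. Then D_μ/d_μ ≤ D_{μ′}/d_{μ′}. -/
/-!
Write `x_i = d + μ_i - i ≥ 1`. Since `Γ(x + 1) = x Γ(x)`, the unit secant slope of the convex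
function `log Γ` at `x` is `log x`, so convexity gives `log Γ(y) ≥ log Γ(x) + (y - x) log x` whenever
`y - x` is an integer. Applied with `y_i = d + μ'_i - i`, it reduces the claim to
`Σ (μ'_i - μ_i) log x_i ≥ 0`, which follows by Abel summation: the weights `log x_i` are
nonnegative and decreasing in `i`, and the partial sums of `μ'_i - μ_i` are nonnegative.
-/

open Real Finset

/-- The ratio `D_μ/d_μ` of the dimension of the irreducible `GL(d,ℂ)` representation with
highest weight `μ` to the dimension of the irreducible `S_n` representation labeled by `μ`,
given by `(1/n!) · Π_{j=1}^{d} Γ(d + μ_j − j + 1)/Γ(d − j + 1)` (hook-content/hook-length). -/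
noncomputable def dimRatio (d n : ℕ) (μ : Fin d → ℕ) : ℝ :=
  (∏ i : Fin d, Real.Gamma ((d : ℝ) + μ i - i) / Real.Gamma ((d : ℝ) - i)) / (n.factorial : ℝ)

theorem ConvexOn.add_mul_sub_le {𝕜 : Type*} [Field 𝕜] [LinearOrder 𝕜] [IsStrictOrderedRing 𝕜]
    {s : Set 𝕜} {f : 𝕜 → 𝕜} (hf : ConvexOn 𝕜 s f) {x y : 𝕜} (hx : x ∈ s) (hx₁ : x + 1 ∈ s)
    (hy : y ∈ s) (hxy : y ≤ x ∨ x + 1 ≤ y) : f x + (y - x) * (f (x + 1) - f x) ≤ f y := by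
  have hx₁x : x + 1 ≠ x := by simp
  rcases hxy with hyx | hxy
  · rcases hyx.eq_or_lt with rfl | hyx
    · simp
    have h := hf.secant_mono hx hy hx₁ hyx.ne hx₁x (by linarith)
    rw [add_sub_cancel_left, div_one, div_le_iff_of_neg (sub_neg.2 hyx)] at h
    linarith
  · have h := hf.secant_mono hx hx₁ hy hx₁x (by linarith) hxy
    rw [add_sub_cancel_left, div_one, le_div_iff₀ (by linarith)] at h
    linarith

theorem Real.log_Gamma_add_mul_log_le {x y : ℝ} (hx : 0 < x) (hy : 0 < y)
    (hxy : y ≤ x ∨ x + 1 ≤ y) : log (Gamma x) + (y - x) * log x ≤ log (Gamma y) := by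
  have h := convexOn_log_Gamma.add_mul_sub_le hx (by simp; linarith) hy hxy
  simp only [Function.comp_apply] at h
  rwa [Gamma_add_one hx.ne', log_mul hx.ne' (Gamma_pos_of_pos hx).ne', add_sub_cancel_right] at h

theorem Fin.sum_mul_nonneg_of_antitone {d : ℕ} {s z : Fin d → ℝ} (hs : Antitone s)
    (hs₀ : ∀ i, 0 ≤ s i)
    (hz : ∀ k : ℕ, 0 ≤ ∑ i ∈ univ.filter (fun i : Fin d => (i : ℕ) < k), z i) :
    0 ≤ ∑ i, s i * z i := by
  induction d with
  | zero => simp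
  | succ d ih =>
    have hinit_sums : ∀ k : ℕ, ∑ i ∈ univ.filter (fun i : Fin d => (i : ℕ) < k), z i.castSucc =
        ∑ i ∈ univ.filter (fun i : Fin (d + 1) => (i : ℕ) < min k d), z i := by
      intro k
      simp [sum_filter, Fin.sum_univ_castSucc]
    have htotal : 0 ≤ ∑ i : Fin d, z i.castSucc + z (Fin.last d) := by
      have h := hz (d + 1)
      rwa [filter_true_of_mem fun i _ => i.2, Fin.sum_univ_castSucc] at h
    have hinit := @ih (fun i => s i.castSucc - s (Fin.last d)) (fun i => z i.castSucc)
      (fun i j hij => by simpa using hs (Fin.castSucc_le_castSucc_iff.2 hij))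
      (fun i => sub_nonneg.2 (hs (Fin.le_last _)))
      (fun k => (hinit_sums k).symm ▸ hz _)
    calc (0 : ℝ) ≤ ∑ i : Fin d, (s i.castSucc - s (Fin.last d)) * z i.castSucc
          + s (Fin.last d) * (∑ i : Fin d, z i.castSucc + z (Fin.last d)) :=
          add_nonneg hinit (mul_nonneg (hs₀ _) htotal)
      _ = ∑ i, s i * z i := by
          simp only [Fin.sum_univ_castSucc, sub_mul, sum_sub_distrib, mul_add, mul_sum]
          ring

theorem Fin.one_le_sub_val {d : ℕ} (i : Fin d) : (1 : ℝ) ≤ d - i := by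
  have h : (i : ℕ) + 1 ≤ d := i.2
  rw [le_sub_iff_add_le']
  exact_mod_cast h

theorem dimRatio_le_dimRatio {d n : ℕ} {μ μ' : Fin d → ℕ}
    (h : ∑ i, log (Gamma ((d : ℝ) + μ i - i)) ≤ ∑ i, log (Gamma ((d : ℝ) + μ' i - i))) :
    dimRatio d n μ ≤ dimRatio d n μ' := by
  have hpos : ∀ (m : ℕ) (i : Fin d), 0 < Gamma ((d : ℝ) + m - i) := fun m i =>
    Gamma_pos_of_pos (by linarith [i.one_le_sub_val, (m.cast_nonneg : (0 : ℝ) ≤ m)])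
  have hprod : ∏ i, Gamma ((d : ℝ) + μ i - i) ≤ ∏ i, Gamma ((d : ℝ) + μ' i - i) := by
    rwa [← log_le_log_iff (prod_pos fun i _ => hpos _ i) (prod_pos fun i _ => hpos _ i),
      log_prod fun i _ => (hpos _ i).ne', log_prod fun i _ => (hpos _ i).ne']
  have hden : 0 < ∏ i : Fin d, Gamma ((d : ℝ) - i) :=
    prod_pos fun i _ => Gamma_pos_of_pos (by linarith [i.one_le_sub_val])
  unfold dimRatio
  rw [prod_div_distrib, prod_div_distrib]
  gcongr

theorem stmt_16_general (d n : ℕ) (μ μ' : Fin d → ℕ)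
    (hμmono : ∀ i j : Fin d, i ≤ j → μ j ≤ μ i)
    (hmaj : ∀ k : ℕ, ∑ i ∈ Finset.univ.filter (fun i : Fin d => (i : ℕ) < k), μ i ≤
      ∑ i ∈ Finset.univ.filter (fun i : Fin d => (i : ℕ) < k), μ' i) :
    dimRatio d n μ ≤ dimRatio d n μ' := by
  set x : Fin d → ℝ := fun i => d + μ i - i
  have hx : ∀ i, 1 ≤ x i := fun i => by
    linarith [i.one_le_sub_val, ((μ i).cast_nonneg : (0 : ℝ) ≤ μ i)]
  have hstep : ∀ i, log (Gamma (x i)) + log (x i) * ((μ' i : ℝ) - μ i) ≤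
      log (Gamma ((d : ℝ) + μ' i - i)) := fun i => by
    have hxy : (d : ℝ) + μ' i - i ≤ x i ∨ x i + 1 ≤ (d : ℝ) + μ' i - i := by
      rcases le_or_gt (μ' i) (μ i) with h | h
      · left
        simp only [x]
        gcongr
      · right
        have : (μ i : ℝ) + 1 ≤ μ' i := by exact_mod_cast h
        simp only [x]
        linarith
    have h := log_Gamma_add_mul_log_le (by linarith [hx i])
      (by linarith [i.one_le_sub_val, ((μ' i).cast_nonneg : (0 : ℝ) ≤ μ' i)]) hxy
    simp only [x] at h ⊢
    linarith
  have hweighted : 0 ≤ ∑ i, log (x i) * ((μ' i : ℝ) - μ i) := by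
    refine Fin.sum_mul_nonneg_of_antitone (fun i j hij => ?_) (fun i => log_nonneg (hx i))
      (fun k => ?_)
    · have hμ : (μ j : ℝ) ≤ μ i := by exact_mod_cast hμmono i j hij
      have hij' : ((i : ℕ) : ℝ) ≤ (j : ℕ) := by exact_mod_cast hij
      exact log_le_log (by linarith [hx j]) (by simp only [x]; linarith)
    · rw [sum_sub_distrib, sub_nonneg]
      exact_mod_cast hmaj k
  apply dimRatio_le_dimRatio
  calc ∑ i, log (Gamma (x i))
      ≤ ∑ i, (log (Gamma (x i)) + log (x i) * ((μ' i : ℝ) - μ i)) := by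
        rw [sum_add_distrib]; linarith
    _ ≤ _ := sum_le_sum fun i _ => hstep i

theorem stmt_16 (d n : ℕ) (hd : 1 ≤ d) (hn : 1 ≤ n) (μ μ' : Fin d → ℕ)
    (hμmono : ∀ i j : Fin d, i ≤ j → μ j ≤ μ i)
    (hμ'mono : ∀ i j : Fin d, i ≤ j → μ' j ≤ μ' i)
    (hμsum : ∑ i, μ i = n) (hμ'sum : ∑ i, μ' i = n)
    (hmaj : ∀ k : ℕ, ∑ i ∈ Finset.univ.filter (fun i : Fin d => (i : ℕ) < k), μ i ≤
      ∑ i ∈ Finset.univ.filter (fun i : Fin d => (i : ℕ) < k), μ' i) :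
    dimRatio d n μ ≤ dimRatio d n μ' :=
  stmt_16_general d n μ μ' hμmono hmaj
end

section
/- Let d ≥ 1 and fix real constants c_j = d − j + 1 > 0 for j = 1,…,d. Then the function F(μ) = Σ_{j=1}^{d} log Γ(c_j + μ_j), defined on decreasing nonnegative real d-tuples μ₁ ≥ μ₂ ≥ … ≥ μ_d ≥ 0, is Schur-convex: if μ is majorized by μ′ (both decreasing with equal total sum), then F(μ) ≤ F(μ′). -/
/-!
Put `x_j = c_j + μ_j` and `y_j = c_j + μ'_j`. Since the `c_j` decrease strictly, `x` is
decreasing, and `y - x = μ' - μ` has nonnegative prefix sums and total sum `0`. For a convex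
differentiable `f`, the tangent-line inequality bounds `Σ (f y_j - f x_j)` below by
`Σ f'(x_j) (y_j - x_j)`, and Abel summation turns this into a combination of the nonnegative
prefix sums of `y - x` with the nonnegative weights `f'(x_j) - f'(x_{j+1})`. Apply this to
`f = log ∘ Γ`, which is convex on `(0, ∞)` by Bohr–Mollerup.
-/

open Finset

theorem Finset.mul_sum_le_sum_mul_of_antitoneOn {ι R : Type*} [LinearOrder ι]
    [CommRing R] [LinearOrder R] [IsStrictOrderedRing R] {s : Finset ι} {m t : ι → R}
    (hm : AntitoneOn m s) (ht : ∀ i ∈ s, 0 ≤ ∑ j ∈ s with j ≤ i, t j)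
    {c : R} (hc : ∀ i ∈ s, c ≤ m i) :
    c * ∑ i ∈ s, t i ≤ ∑ i ∈ s, m i * t i := by
  classical
  -- peeling off the largest index `a`, the induction hypothesis is used with `c = m a`
  induction s using Finset.induction_on_max generalizing c with
  | empty => simp
  | insert a s ha ih =>
    have has : a ∉ s := fun h => lt_irrefl a (ha a h)
    have hs : m a * ∑ i ∈ s, t i ≤ ∑ i ∈ s, m i * t i := by
      refine ih (hm.mono (subset_insert a s)) (fun i hi => ?_)
        (fun i hi => hm (mem_insert_of_mem hi) (mem_insert_self a s) (ha i hi).le)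
      simpa [filter_insert, (ha i hi).not_ge] using ht i (mem_insert_of_mem hi)
    have htotal : 0 ≤ ∑ i ∈ insert a s, t i := by
      have hle : ∀ j ∈ insert a s, j ≤ a := fun j hj =>
        (mem_insert.1 hj).elim le_of_eq fun hj => (ha j hj).le
      simpa [filter_true_of_mem hle] using ht a (mem_insert_self a s)
    calc c * ∑ i ∈ insert a s, t i
        ≤ m a * ∑ i ∈ insert a s, t i :=
          mul_le_mul_of_nonneg_right (hc a (mem_insert_self a s)) htotal
      _ = m a * t a + m a * ∑ i ∈ s, t i := by rw [sum_insert has, mul_add]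
      _ ≤ ∑ i ∈ insert a s, m i * t i := by rw [sum_insert has]; gcongr

theorem Finset.sum_mul_nonneg_of_antitoneOn {ι R : Type*} [LinearOrder ι]
    [CommRing R] [LinearOrder R] [IsStrictOrderedRing R] {s : Finset ι} {m t : ι → R}
    (hm : AntitoneOn m s) (ht : ∀ i ∈ s, 0 ≤ ∑ j ∈ s with j ≤ i, t j)
    (hsum : ∑ i ∈ s, t i = 0) :
    0 ≤ ∑ i ∈ s, m i * t i := by
  obtain ⟨c, hc⟩ := (s.image m).bddBelow
  simpa [hsum] using mul_sum_le_sum_mul_of_antitoneOn hm ht fun i hi => hc (mem_image_of_mem m hi)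

theorem ConvexOn.deriv_mul_sub_le {S : Set ℝ} {f : ℝ → ℝ} (hf : ConvexOn ℝ S f) {x y : ℝ}
    (hx : x ∈ S) (hy : y ∈ S) (hfx : DifferentiableAt ℝ f x) :
    deriv f x * (y - x) ≤ f y - f x := by
  rcases lt_trichotomy x y with hxy | rfl | hxy
  · have := hf.deriv_le_slope hx hy hxy hfx
    rwa [slope_def_field, le_div_iff₀ (sub_pos.2 hxy)] at this
  · simp
  · have := hf.slope_le_deriv hy hx hxy hfx
    rw [slope_def_field, div_le_iff₀ (sub_pos.2 hxy)] at this
    linarith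

theorem ConvexOn.sum_comp_le_sum_comp_of_prefix_sum_le {ι : Type*} [LinearOrder ι]
    {S : Set ℝ} {f : ℝ → ℝ} (hf : ConvexOn ℝ S f) (hfd : ∀ x ∈ S, DifferentiableAt ℝ f x)
    {s : Finset ι} {x y : ι → ℝ} (hxS : ∀ i ∈ s, x i ∈ S) (hyS : ∀ i ∈ s, y i ∈ S)
    (hx : AntitoneOn x s)
    (hprefix : ∀ i ∈ s, ∑ j ∈ s with j ≤ i, x j ≤ ∑ j ∈ s with j ≤ i, y j)
    (hsum : ∑ i ∈ s, x i = ∑ i ∈ s, y i) :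
    ∑ i ∈ s, f (x i) ≤ ∑ i ∈ s, f (y i) := by
  have hslopes : AntitoneOn (fun i => deriv f (x i)) s := fun i hi j hj hij =>
    hf.monotoneOn_deriv hfd (hxS j hj) (hxS i hi) (hx hi hj hij)
  have habel : 0 ≤ ∑ i ∈ s, deriv f (x i) * (y i - x i) :=
    sum_mul_nonneg_of_antitoneOn hslopes
      (fun i hi => by simpa only [sum_sub_distrib, sub_nonneg] using hprefix i hi)
      (by rw [sum_sub_distrib, hsum, sub_self])
  rw [← sub_nonneg, ← sum_sub_distrib]
  exact habel.trans <| sum_le_sum fun i hi =>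
    hf.deriv_mul_sub_le (hxS i hi) (hyS i hi) (hfd _ (hxS i hi))

theorem Real.differentiableAt_log_Gamma {x : ℝ} (hx : 0 < x) :
    DifferentiableAt ℝ (Real.log ∘ Real.Gamma) x :=
  (Real.differentiableAt_Gamma fun m => by linarith [(m.cast_nonneg : (0 : ℝ) ≤ m)]).log
    (Real.Gamma_pos_of_pos hx).ne'

/-- `F(μ) = Σ_{j=1}^{d} log Γ(c_j + μ_j)` with `c_j = d − j + 1`. -/
noncomputable def F (d : ℕ) (μ : Fin d → ℝ) : ℝ :=
  ∑ i : Fin d, Real.log (Real.Gamma ((d : ℝ) - i + μ i))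

theorem stmt_17_general (d : ℕ) (μ μ' : Fin d → ℝ)
    (hμmono : ∀ i j : Fin d, i ≤ j → μ j ≤ μ i)
    (hμpos : ∀ i, 0 ≤ μ i) (hμ'pos : ∀ i, 0 ≤ μ' i)
    (hsum : ∑ i, μ i = ∑ i, μ' i)
    (hmaj : ∀ k : ℕ, ∑ i ∈ Finset.univ.filter (fun i : Fin d => (i : ℕ) < k), μ i ≤
      ∑ i ∈ Finset.univ.filter (fun i : Fin d => (i : ℕ) < k), μ' i) :
    F d μ ≤ F d μ' := by
  have hc : ∀ i : Fin d, 1 ≤ (d : ℝ) - i := fun i => by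
    have : (i : ℝ) + 1 ≤ d := by exact_mod_cast i.isLt
    linarith
  refine Real.convexOn_log_Gamma.sum_comp_le_sum_comp_of_prefix_sum_le
    (fun x hx => Real.differentiableAt_log_Gamma hx)
    (fun i _ => ?_) (fun i _ => ?_) (fun i _ j _ hij => ?_) (fun i _ => ?_) ?_
  · exact Set.mem_Ioi.2 (by linarith [hc i, hμpos i])
  · exact Set.mem_Ioi.2 (by linarith [hc i, hμ'pos i])
  · have : (i : ℝ) ≤ j := by exact_mod_cast hij
    linarith [hμmono i j hij]
  · simpa only [sum_add_distrib, add_le_add_iff_left, Nat.lt_add_one_iff, ← Fin.le_iff_val_le_val]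
      using hmaj (i + 1)
  · simp only [sum_add_distrib, hsum]

theorem stmt_17 (d : ℕ) (hd : 1 ≤ d) (μ μ' : Fin d → ℝ)
    (hμmono : ∀ i j : Fin d, i ≤ j → μ j ≤ μ i)
    (hμ'mono : ∀ i j : Fin d, i ≤ j → μ' j ≤ μ' i)
    (hμpos : ∀ i, 0 ≤ μ i) (hμ'pos : ∀ i, 0 ≤ μ' i)
    (hsum : ∑ i, μ i = ∑ i, μ' i)
    (hmaj : ∀ k : ℕ, ∑ i ∈ Finset.univ.filter (fun i : Fin d => (i : ℕ) < k), μ i ≤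
      ∑ i ∈ Finset.univ.filter (fun i : Fin d => (i : ℕ) < k), μ' i) :
    F d μ ≤ F d μ' :=
  stmt_17_general d μ μ' hμmono hμpos hμ'pos hsum hmaj
end
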